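/- arXiv:1705.08024 — 4 statements merged into one kernel-verified Lean document; each statement's English description precedes it below -/
import Mathlib

section
/- Let A be a finite-dimensional Z-graded K-algebra with triangular decomposition (A⁻,T,A⁺), and let λ be a simple graded T-module concentrated in degree d. Then the proper standard module Δ̄(λ) has a simple head L(λ), the degree-d component of L(λ) is isomorphic to λ as a T-module, and L(λ) is supported in degrees ≤ d. -/
open scoped TensorProduct

universe u

namespace TriangularPaper

variable (K A : Type u) [Field K] [Ring A] [Algebra K A]

/-- The multiplication map `M ⊗ N → A` for two `K`-subspaces of `A`. -/
noncomputable def mulMap (M N : Submodule K A) : (↥M ⊗[K] ↥N) →ₗ[K] A :=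
  (LinearMap.mul' K A).comp (TensorProduct.map M.subtype N.subtype)

/-- The triple multiplication map `(P ⊗ Q) ⊗ R → A`. -/
noncomputable def triMulMap (P Q R : Submodule K A) :
    ((↥P ⊗[K] ↥Q) ⊗[K] ↥R) →ₗ[K] A :=
  (LinearMap.mul' K A).comp (TensorProduct.map (mulMap K A P Q) R.subtype)

/-- A triangular decomposition `(A⁻, T, A⁺)` of the finite-dimensional graded algebra `A`
with internal grading `𝒜`, in the sense of Holmes–Nakano. -/
structure TriangularDecomposition (𝒜 : ℤ → Submodule K A)
    (Am T Ap : Subalgebra K A) : Prop where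
  /-- `𝒜` is a grading of `A` -/
  internal : DirectSum.IsInternal 𝒜
  one_mem : (1 : A) ∈ 𝒜 0
  mul_mem : ∀ i j : ℤ, ∀ a b : A, a ∈ 𝒜 i → b ∈ 𝒜 j → a * b ∈ 𝒜 (i + j)
  /-- multiplication `A⁻ ⊗ T ⊗ A⁺ → A` is a linear isomorphism -/
  mul_bij : Function.Bijective (triMulMap K A Am.toSubmodule T.toSubmodule Ap.toSubmodule)
  /-- `T` is concentrated in degree `0` -/
  T_deg0 : T.toSubmodule ≤ 𝒜 0
  /-- `A⁻` is supported in nonpositive degrees -/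
  neg_supp : Am.toSubmodule ≤ ⨆ n : ℕ, 𝒜 (-(n : ℤ))
  /-- `A⁺` is supported in nonnegative degrees -/
  pos_supp : Ap.toSubmodule ≤ ⨆ n : ℕ, 𝒜 (n : ℤ)
  /-- `A⁻` is a graded subalgebra -/
  neg_graded : Am.toSubmodule = ⨆ i : ℤ, Am.toSubmodule ⊓ 𝒜 i
  /-- `A⁺` is a graded subalgebra -/
  pos_graded : Ap.toSubmodule = ⨆ i : ℤ, Ap.toSubmodule ⊓ 𝒜 i
  /-- `A⁻₀ = K` -/
  neg_deg0 : Am.toSubmodule ⊓ 𝒜 0 = Submodule.span K {(1 : A)}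
  /-- `A⁺₀ = K` -/
  pos_deg0 : Ap.toSubmodule ⊓ 𝒜 0 = Submodule.span K {(1 : A)}
  /-- `A⁺T = TA⁺` as subspaces of `A` -/
  comm_pos : Ap.toSubmodule * T.toSubmodule = T.toSubmodule * Ap.toSubmodule
  /-- `A⁻T = TA⁻` as subspaces of `A` -/
  comm_neg : Am.toSubmodule * T.toSubmodule = T.toSubmodule * Am.toSubmodule
  /-- `T` is a split `K`-algebra -/
  T_split : ∀ (V : Type u) [AddCommGroup V] [Module ↥T V], IsSimpleModule ↥T V →
    ∀ f : V →ₗ[↥T] V, ∃ c : K, ∀ v, f v = algebraMap K ↥T c • v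

/-- The negative Borel subalgebra `B⁻ = A⁻T` (as a subspace). -/
noncomputable def Bneg (Am T : Subalgebra K A) : Submodule K A :=
  Am.toSubmodule * T.toSubmodule

/-- The positive Borel subalgebra `B⁺ = A⁺T` (as a subspace). -/
noncomputable def Bpos (T Ap : Subalgebra K A) : Submodule K A :=
  Ap.toSubmodule * T.toSubmodule

/-- The augmentation ideal `J⁺` of the positive Borel subalgebra. -/
noncomputable def Jpos (𝒜 : ℤ → Submodule K A) (T Ap : Subalgebra K A) : Submodule K A :=
  ⨆ (i : ℤ) (_ : 0 < i), Bpos K A T Ap ⊓ 𝒜 i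

/-- The augmentation ideal `J⁻` of the negative Borel subalgebra. -/
noncomputable def Jneg (𝒜 : ℤ → Submodule K A) (Am T : Subalgebra K A) : Submodule K A :=
  ⨆ (i : ℤ) (_ : i < 0), Bneg K A Am T ⊓ 𝒜 i

/-- `(D, ι)` realizes the proper standard module `Δ̄(M) = A ⊗_{B⁺} Inf_T^{B⁺} M`,
expressed through its universal property `Hom_A(Δ̄(M), N) ≅ Hom_{B⁺}(Inf M, Res N)`. -/
def IsProperStandardFor (𝒜 : ℤ → Submodule K A) (T Ap : Subalgebra K A)
    (M : Type u) [AddCommGroup M] [Module ↥T M]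
    (D : Type u) [AddCommGroup D] [Module A D] (ι : M →+ D) : Prop :=
  (∀ (t : ↥T) (m : M), ι (t • m) = (t : A) • ι m) ∧
  (∀ a ∈ Jpos K A 𝒜 T Ap, ∀ m : M, a • ι m = 0) ∧
  ∀ (N : Type u) [AddCommGroup N] [Module A N] (f : M →+ N),
    (∀ (t : ↥T) (m : M), f (t • m) = (t : A) • f m) →
    (∀ a ∈ Jpos K A 𝒜 T Ap, ∀ m : M, a • f m = 0) →
    ∃! F : D →ₗ[A] N, ∀ m, F (ι m) = f m

/-- `(D, p)` realizes the proper costandard module `∇̄(M)`, expressed through its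
couniversal property `Hom_A(N, ∇̄(M)) ≅ Hom_{B⁻}(Res N, Inf M)`. -/
def IsProperCostandardFor (𝒜 : ℤ → Submodule K A) (Am T : Subalgebra K A)
    (M : Type u) [AddCommGroup M] [Module ↥T M]
    (D : Type u) [AddCommGroup D] [Module A D] (p : D →+ M) : Prop :=
  (∀ (t : ↥T) (x : D), p ((t : A) • x) = t • p x) ∧
  (∀ a ∈ Jneg K A 𝒜 Am T, ∀ x : D, p (a • x) = 0) ∧
  ∀ (N : Type u) [AddCommGroup N] [Module A N] (f : N →+ M),
    (∀ (t : ↥T) (x : N), f ((t : A) • x) = t • f x) →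
    (∀ a ∈ Jneg K A 𝒜 Am T, ∀ x : N, f (a • x) = 0) →
    ∃! F : N →ₗ[A] D, ∀ x, p (F x) = f x

/-- A compatible grading on an `A`-module `D`, making it an object of `𝒢(A)`. -/
def IsModuleGrading (𝒜 : ℤ → Submodule K A) {D : Type u} [AddCommGroup D] [Module A D]
    [Module K D] [IsScalarTower K A D] (ℳ : ℤ → Submodule K D) : Prop :=
  DirectSum.IsInternal ℳ ∧
    ∀ (i j : ℤ) (a : A) (x : D), a ∈ 𝒜 i → x ∈ ℳ j → a • x ∈ ℳ (i + j)

end TriangularPaper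

/-!
By the triangular decomposition `A = A⁻ B⁺`, and since `B⁺` acts on `ι(λ)` through `B⁺ → T`, the
proper standard module `Δ̄(λ)` is spanned by `A⁻ • ι(λ)`. As `A⁻` lives in degrees `≤ 0` with
`A⁻₀ = K`, `Δ̄(λ)` vanishes above degree `d` and its degree-`d` part is `ι(λ)`; `ι` is injective
because `λ` embeds `B⁺`-equivariantly into the `A`-module `Hom(A, λ)`, via the projection
`A = A⁻ ⊗ T ⊗ A⁺ → T`.

If a submodule `N` has a nonzero degree-`d` component, these components form a nonzero
`T`-submodule of `ι(λ) ≅ λ`, hence all of it, so `ι(λ) ⊆ N + Δ̄(λ)_{<d}`. Applying `A⁻_{<0}`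
and descending on the degree, which is bounded below as `A` is finite-dimensional, gives
`N = Δ̄(λ)`. So the sum of all proper submodules has zero degree-`d` component: it is the unique
maximal submodule, and the head `L(λ)` keeps the degree-`d` part `λ` and nothing above `d`.
-/

open DirectSum
open GradedAlgebra (proj proj_apply)

namespace TriangularPaper

section Graded

variable {ι K M : Type*} [DecidableEq ι] [Semiring K]

section AddCommMonoid

variable [AddCommMonoid M] [Module K M] (ℳ : ι → Submodule K M) [Decomposition ℳ]

theorem isHomogeneous_of_eq_iSup_inf {p : Submodule K M} (hp : p = ⨆ i, p ⊓ ℳ i) :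
    SetLike.IsHomogeneous ℳ p := by
  intro j x hx
  rw [hp] at hx
  induction hx using Submodule.iSup_induction' with
  | mem i x hx =>
    obtain rfl | hij := eq_or_ne i j
    · rw [decompose_of_mem_same ℳ hx.2]; exact hx.1
    · rw [decompose_of_mem_ne ℳ hx.2 hij]; exact zero_mem p
  | zero => simp
  | add x y _ _ hx hy => simpa using add_mem hx hy

theorem decompose_eq_zero_of_mem_biSup {s : Set ι} {x : M} (hx : x ∈ ⨆ i ∈ s, ℳ i) {j : ι}
    (hj : j ∉ s) : (decompose ℳ x j : M) = 0 := by
  rw [iSup_subtype'] at hx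
  induction hx using Submodule.iSup_induction' with
  | mem i x hx => exact decompose_of_mem_ne ℳ hx fun hij => hj (hij ▸ i.2)
  | zero => simp
  | add x y _ _ hx hy => simp [hx, hy]

end AddCommMonoid

theorem sub_decompose_mem_iSup_ne [AddCommGroup M] [Module K M]
    (ℳ : ι → Submodule K M) [Decomposition ℳ] (x : M) (j : ι) :
    x - decompose ℳ x j ∈ ⨆ i ≠ j, ℳ i := by
  induction x using Decomposition.inductionOn ℳ with
  | zero => simp
  | @homogeneous i x =>
    obtain rfl | hij := eq_or_ne i j
    · simp
    · rw [decompose_coe, of_eq_of_ne _ _ _ hij.symm, ZeroMemClass.coe_zero, sub_zero]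
      exact Submodule.mem_iSup_of_mem i (Submodule.mem_iSup_of_mem hij x.2)
  | add x y hx hy =>
    rw [decompose_add, DirectSum.add_apply, Submodule.coe_add, add_sub_add_comm]
    exact add_mem hx hy

end Graded

section GradedModule

variable {ι K A M : Type*} [DecidableEq ι] [CommSemiring K] [Semiring A] [Algebra K A]
  [AddCommMonoid M] [Module K M] [Module A M] (𝒜 : ι → Submodule K A) (ℳ : ι → Submodule K M)
  [Decomposition ℳ]

theorem coe_decompose_smul_add_of_left_mem [AddLeftCancelMonoid ι] [SetLike.GradedSMul 𝒜 ℳ]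
    {a : A} {i : ι} (ha : a ∈ 𝒜 i) (v : M) (j : ι) :
    (decompose ℳ (a • v) (i + j) : M) = a • (decompose ℳ v j : M) := by
  induction v using Decomposition.inductionOn ℳ with
  | zero => simp
  | @homogeneous k v =>
    have hav : a • (v : M) ∈ ℳ (i + k) := SetLike.GradedSMul.smul_mem ha v.2
    obtain rfl | hkj := eq_or_ne k j
    · rw [decompose_of_mem_same ℳ hav, decompose_coe, of_eq_same]
    · rw [decompose_of_mem_ne ℳ hav (by simpa using hkj), decompose_coe,
        of_eq_of_ne _ _ _ hkj.symm, ZeroMemClass.coe_zero, smul_zero]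
  | add v w hv hw => simp [smul_add, hv, hw]

theorem coe_decompose_smul_add_of_right_mem [AddRightCancelMonoid ι] [GradedAlgebra 𝒜]
    [SetLike.GradedSMul 𝒜 ℳ] {v : M} {j : ι} (hv : v ∈ ℳ j) (a : A) (i : ι) :
    (decompose ℳ (a • v) (i + j) : M) = (decompose 𝒜 a i : A) • v := by
  induction a using Decomposition.inductionOn 𝒜 with
  | zero => simp
  | @homogeneous k a =>
    have hav : (a : A) • v ∈ ℳ (k + j) := SetLike.GradedSMul.smul_mem a.2 hv
    obtain rfl | hki := eq_or_ne k i
    · rw [decompose_of_mem_same ℳ hav, decompose_coe, of_eq_same]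
    · rw [decompose_of_mem_ne ℳ hav (by simpa using hki), decompose_coe,
        of_eq_of_ne _ _ _ hki.symm, ZeroMemClass.coe_zero, zero_smul]
  | add a b ha hb => simp [add_smul, ha, hb]

end GradedModule

theorem smul_mem_iSup_lt {K A M : Type*} [CommSemiring K] [Semiring A] [Algebra K A]
    [AddCommMonoid M] [Module K M] [Module A M] {𝒜 : ℤ → Submodule K A} {ℳ : ℤ → Submodule K M}
    [SetLike.GradedSMul 𝒜 ℳ] {a : A} {e : ℤ} (ha : a ∈ 𝒜 e)
    {l : ℤ} {w : M} (hw : w ∈ ⨆ j < l, ℳ j) : a • w ∈ ⨆ j < e + l, ℳ j := by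
  rw [iSup_subtype'] at hw
  induction hw using Submodule.iSup_induction' with
  | mem j w hw =>
    obtain ⟨j, hj : j < l⟩ := j
    exact Submodule.mem_iSup_of_mem (e + j) <| Submodule.mem_iSup_of_mem (by omega) <|
      SetLike.GradedSMul.smul_mem ha hw
  | zero => simp
  | add w w' _ _ hw hw' => rw [smul_add]; exact add_mem hw hw'

theorem iSup_lt_add_one_le {K M : Type*} [Semiring K] [AddCommMonoid M] [Module K M]
    (ℳ : ℤ → Submodule K M) (k : ℤ) : ⨆ j < k + 1, ℳ j ≤ (⨆ j < k, ℳ j) ⊔ ℳ k :=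
  iSup₂_le fun j hj => (Int.lt_add_one_iff.mp hj).lt_or_eq.elim
    (fun hjk => le_sup_of_le_left (le_iSup₂_of_le j hjk le_rfl)) (fun hjk => hjk ▸ le_sup_right)

theorem exists_forall_le_eq_bot {K M : Type*} [Ring K] [AddCommGroup M] [Module K M]
    [IsNoetherian K M] {ℳ : ℤ → Submodule K M} (hℳ : iSupIndep ℳ) :
    ∃ n : ℤ, ∀ i ≤ n, ℳ i = ⊥ := by
  obtain ⟨b, hb⟩ := (Submodule.finite_ne_bot_of_iSupIndep hℳ).bddBelow
  exact ⟨b - 1, fun i hi => by_contra fun hne => by have := hb hne; omega⟩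

section NonnegPart

variable {K A : Type*} [CommSemiring K] [Semiring A] [Algebra K A] (𝒜 : ℤ → Submodule K A)
  [GradedAlgebra 𝒜]

theorem proj_zero_mul_of_mem_nonneg {a b : A} (ha : a ∈ ⨆ i ∈ Set.Ici 0, 𝒜 i)
    (hb : b ∈ ⨆ i ∈ Set.Ici 0, 𝒜 i) : proj 𝒜 0 (a * b) = proj 𝒜 0 a * proj 𝒜 0 b := by
  rw [iSup_subtype'] at ha hb
  induction ha using Submodule.iSup_induction' with
  | zero => simp
  | add a a' _ _ h h' => rw [add_mul, map_add, map_add, h, h', add_mul]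
  | mem i a ha =>
    induction hb using Submodule.iSup_induction' with
    | zero => simp
    | add b b' _ _ h h' => rw [mul_add, map_add, map_add, h, h', mul_add]
    | mem j b hb =>
      obtain ⟨i, hi : 0 ≤ i⟩ := i
      obtain ⟨j, hj : 0 ≤ j⟩ := j
      have hab : a * b ∈ 𝒜 (i + j) := SetLike.GradedMul.mul_mem ha hb
      simp only [proj_apply]
      rcases eq_or_ne i 0 with rfl | hi0
      · rcases eq_or_ne j 0 with rfl | hj0
        · rw [decompose_of_mem_same _ ha, decompose_of_mem_same _ hb,
            decompose_of_mem_same _ (by simpa using hab)]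
        · rw [decompose_of_mem_ne _ hb hj0, decompose_of_mem_ne _ hab (by simpa using hj0),
            mul_zero]
      · rw [decompose_of_mem_ne _ ha hi0, decompose_of_mem_ne _ hab (by omega), zero_mul]

end NonnegPart

namespace TriangularDecomposition

variable {K A : Type u} [Field K] [Ring A] [Algebra K A] {𝒜 : ℤ → Submodule K A}
  {Am T Ap : Subalgebra K A}

noncomputable abbrev toGradedAlgebra (h : TriangularDecomposition K A 𝒜 Am T Ap) :
    GradedAlgebra 𝒜 where
  __ := h.internal.chooseDecomposition
  one_mem := h.one_mem
  mul_mem _ _ _ _ ha hb := h.mul_mem _ _ _ _ ha hb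

theorem am_le_nonpos (h : TriangularDecomposition K A 𝒜 Am T Ap) :
    Am.toSubmodule ≤ ⨆ i ∈ Set.Iic 0, 𝒜 i :=
  h.neg_supp.trans <| iSup_le fun n => le_iSup₂_of_le (-(n : ℤ)) (by simp) le_rfl

theorem ap_le_nonneg (h : TriangularDecomposition K A 𝒜 Am T Ap) :
    Ap.toSubmodule ≤ ⨆ i ∈ Set.Ici 0, 𝒜 i :=
  h.pos_supp.trans <| iSup_le fun n => le_iSup₂_of_le (n : ℤ) (by simp) le_rfl

theorem T_le_bpos : T.toSubmodule ≤ Bpos K A T Ap := fun t ht =>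
  one_mul t ▸ Submodule.mul_mem_mul (show (1 : A) ∈ Ap.toSubmodule from Ap.one_mem) ht

theorem jpos_le_bpos : Jpos K A 𝒜 T Ap ≤ Bpos K A T Ap := iSup₂_le fun _ _ => inf_le_left

theorem bpos_mul_bpos (h : TriangularDecomposition K A 𝒜 Am T Ap) :
    Bpos K A T Ap * Bpos K A T Ap = Bpos K A T Ap := by
  simp only [Bpos]
  rw [mul_assoc, ← mul_assoc T.toSubmodule, ← h.comm_pos, mul_assoc,
    (Subalgebra.isIdempotentElem_toSubmodule T).eq, ← mul_assoc,
    (Subalgebra.isIdempotentElem_toSubmodule Ap).eq]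

theorem mul_mem_bpos (h : TriangularDecomposition K A 𝒜 Am T Ap) {b c : A}
    (hb : b ∈ Bpos K A T Ap) (hc : c ∈ Bpos K A T Ap) : b * c ∈ Bpos K A T Ap :=
  h.bpos_mul_bpos ▸ Submodule.mul_mem_mul hb hc

theorem am_mul_bpos_eq_top (h : TriangularDecomposition K A 𝒜 Am T Ap) :
    Am.toSubmodule * Bpos K A T Ap = ⊤ := by
  rw [eq_top_iff]
  rintro a -
  obtain ⟨z, rfl⟩ := h.mul_bij.2 a
  induction z with
  | zero => simp
  | add z w hz hw => rw [map_add]; exact add_mem hz hw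
  | tmul p y =>
    induction p with
    | zero => simp
    | add p q hp hq => rw [TensorProduct.add_tmul, map_add]; exact add_mem hp hq
    | tmul x t =>
      have hty : (t : A) * y ∈ Bpos K A T Ap := by
        rw [Bpos, h.comm_pos]; exact Submodule.mul_mem_mul t.2 y.2
      simpa [triMulMap, mulMap, mul_assoc] using Submodule.mul_mem_mul x.2 hty

variable [GradedAlgebra 𝒜]

theorem am_inf_eq_bot_of_pos (h : TriangularDecomposition K A 𝒜 Am T Ap) {i : ℤ} (hi : 0 < i) :
    Am.toSubmodule ⊓ 𝒜 i = ⊥ := by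
  refine eq_bot_iff.mpr fun x ⟨hxAm, hx⟩ => ?_
  rw [Submodule.mem_bot, ← decompose_of_mem_same 𝒜 hx]
  exact decompose_eq_zero_of_mem_biSup 𝒜 (h.am_le_nonpos hxAm) (by simpa using hi)

theorem proj_zero_mem_of_inf_zero_eq_span_one {S : Subalgebra K A}
    (hS : S.toSubmodule = ⨆ i, S.toSubmodule ⊓ 𝒜 i)
    (hS₀ : S.toSubmodule ⊓ 𝒜 0 = Submodule.span K {1}) (B : Subalgebra K A) {x : A}
    (hx : x ∈ S) : proj 𝒜 0 x ∈ B := by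
  have hx₀ : proj 𝒜 0 x ∈ S.toSubmodule ⊓ 𝒜 0 :=
    ⟨isHomogeneous_of_eq_iSup_inf 𝒜 hS 0 hx, SetLike.coe_mem _⟩
  rw [hS₀, Submodule.mem_span_singleton] at hx₀
  obtain ⟨c, hc⟩ := hx₀
  rw [← hc]
  exact B.smul_mem B.one_mem c

theorem proj_zero_mem_T_of_mem_am (h : TriangularDecomposition K A 𝒜 Am T Ap) {x : A}
    (hx : x ∈ Am) : proj 𝒜 0 x ∈ T :=
  proj_zero_mem_of_inf_zero_eq_span_one h.neg_graded h.neg_deg0 T hx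

theorem proj_zero_mem_T_of_mem_bpos (h : TriangularDecomposition K A 𝒜 Am T Ap) {b : A}
    (hb : b ∈ Bpos K A T Ap) : proj 𝒜 0 b ∈ T := by
  induction hb using Submodule.mul_induction_on' with
  | mem_mul_mem y hy t ht =>
    rw [proj_apply, coe_decompose_mul_of_right_mem_zero 𝒜 (h.T_deg0 ht)]
    exact T.mul_mem (proj_zero_mem_of_inf_zero_eq_span_one h.pos_graded h.pos_deg0 T hy) ht
  | add b c _ _ hb hc => rw [map_add]; exact T.add_mem hb hc

theorem bpos_isHomogeneous (h : TriangularDecomposition K A 𝒜 Am T Ap) :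
    SetLike.IsHomogeneous 𝒜 (Bpos K A T Ap) := by
  intro i b hb
  induction hb using Submodule.mul_induction_on' with
  | mem_mul_mem y hy t ht =>
    rw [coe_decompose_mul_of_right_mem_zero 𝒜 (h.T_deg0 ht)]
    exact Submodule.mul_mem_mul (isHomogeneous_of_eq_iSup_inf 𝒜 h.pos_graded i hy) ht
  | add b c _ _ hb hc =>
    rw [decompose_add, DirectSum.add_apply, Submodule.coe_add]
    exact add_mem hb hc

theorem bpos_le_nonneg (h : TriangularDecomposition K A 𝒜 Am T Ap) :
    Bpos K A T Ap ≤ ⨆ i ∈ Set.Ici 0, 𝒜 i :=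
  calc Bpos K A T Ap ≤ (⨆ i ∈ Set.Ici 0, 𝒜 i) * 𝒜 0 := mul_le_mul' h.ap_le_nonneg h.T_deg0
    _ = ⨆ i ∈ Set.Ici 0, 𝒜 i * 𝒜 0 := by simp only [Submodule.iSup_mul]
    _ ≤ ⨆ i ∈ Set.Ici 0, 𝒜 i := iSup₂_mono fun i _ => Submodule.mul_le.mpr fun a ha b hb => by
      simpa using SetLike.GradedMul.mul_mem ha hb

theorem proj_zero_mul_of_mem_bpos (h : TriangularDecomposition K A 𝒜 Am T Ap) {b c : A}
    (hb : b ∈ Bpos K A T Ap) (hc : c ∈ Bpos K A T Ap) :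
    proj 𝒜 0 (b * c) = proj 𝒜 0 b * proj 𝒜 0 c :=
  proj_zero_mul_of_mem_nonneg 𝒜 (h.bpos_le_nonneg hb) (h.bpos_le_nonneg hc)

theorem proj_zero_eq_zero_of_mem_jpos {a : A} (ha : a ∈ Jpos K A 𝒜 T Ap) : proj 𝒜 0 a = 0 := by
  have hle : Jpos K A 𝒜 T Ap ≤ ⨆ i ∈ Set.Ioi 0, 𝒜 i :=
    iSup₂_mono fun i _ => inf_le_right
  exact decompose_eq_zero_of_mem_biSup 𝒜 (hle ha) (by simp)

theorem sub_proj_zero_mem_jpos (h : TriangularDecomposition K A 𝒜 Am T Ap) {b : A}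
    (hb : b ∈ Bpos K A T Ap) : b - proj 𝒜 0 b ∈ Jpos K A 𝒜 T Ap := by
  classical
  rw [← sum_support_decompose 𝒜 (b - proj 𝒜 0 b)]
  refine sum_mem fun i _ => ?_
  rw [decompose_sub, DirectSum.sub_apply, Submodule.coe_sub, proj_apply, decompose_coe]
  rcases lt_trichotomy i 0 with hi | rfl | hi
  · rw [of_eq_of_ne _ _ _ hi.ne, ZeroMemClass.coe_zero, sub_zero,
      decompose_eq_zero_of_mem_biSup 𝒜 (h.bpos_le_nonneg hb) (by simpa using hi)]
    exact zero_mem _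
  · rw [of_eq_same, sub_self]
    exact zero_mem _
  · rw [of_eq_of_ne _ _ _ hi.ne', ZeroMemClass.coe_zero, sub_zero]
    exact Submodule.mem_iSup_of_mem i <| Submodule.mem_iSup_of_mem hi
      ⟨h.bpos_isHomogeneous i hb, SetLike.coe_mem _⟩

/-- The projection `A → T` along `A⁻_{<0} B⁺`: under `A ≅ A⁻ ⊗ T ⊗ A⁺` it sends `x t y` to
`π₀(x) t π₀(y)`, where `π₀` is the degree-`0` projection. -/
noncomputable def cartanProj (h : TriangularDecomposition K A 𝒜 Am T Ap) : A →ₗ[K] A :=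
  LinearMap.mul' K A ∘ₗ
    TensorProduct.map
      (LinearMap.mul' K A ∘ₗ
        TensorProduct.map (proj 𝒜 0 ∘ₗ Am.toSubmodule.subtype) T.toSubmodule.subtype)
      (proj 𝒜 0 ∘ₗ Ap.toSubmodule.subtype) ∘ₗ
    (LinearEquiv.ofBijective _ h.mul_bij).symm.toLinearMap

theorem cartanProj_mul_mul (h : TriangularDecomposition K A 𝒜 Am T Ap) {x t y : A}
    (hx : x ∈ Am) (ht : t ∈ T) (hy : y ∈ Ap) :
    h.cartanProj (x * t * y) = proj 𝒜 0 x * t * proj 𝒜 0 y := by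
  have hxty : x * t * y = triMulMap K A _ _ _
      (((⟨x, hx⟩ : Am.toSubmodule) ⊗ₜ[K] (⟨t, ht⟩ : T.toSubmodule)) ⊗ₜ[K]
        (⟨y, hy⟩ : Ap.toSubmodule)) := by
    simp [triMulMap, mulMap]
  simp only [hxty, cartanProj, LinearMap.comp_apply, LinearEquiv.coe_coe,
    LinearEquiv.ofBijective_symm_apply_apply]
  simp

theorem cartanProj_mul_of_mem_am (h : TriangularDecomposition K A 𝒜 Am T Ap) {x c : A}
    (hx : x ∈ Am) (hc : c ∈ Bpos K A T Ap) :
    h.cartanProj (x * c) = proj 𝒜 0 x * proj 𝒜 0 c := by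
  rw [Bpos, h.comm_pos] at hc
  induction hc using Submodule.mul_induction_on' with
  | mem_mul_mem t ht y hy =>
    rw [← mul_assoc, h.cartanProj_mul_mul hx ht hy, mul_assoc, proj_apply, proj_apply,
      proj_apply, coe_decompose_mul_of_left_mem_zero 𝒜 (h.T_deg0 ht)]
  | add c c' _ _ hc hc' => rw [mul_add, map_add, hc, hc', map_add, mul_add]

theorem cartanProj_mul_of_mem_bpos (h : TriangularDecomposition K A 𝒜 Am T Ap) (a : A) {b : A}
    (hb : b ∈ Bpos K A T Ap) : h.cartanProj (a * b) = h.cartanProj a * proj 𝒜 0 b := by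
  have ha : a ∈ Am.toSubmodule * Bpos K A T Ap := h.am_mul_bpos_eq_top ▸ Submodule.mem_top
  induction ha using Submodule.mul_induction_on' with
  | mem_mul_mem x hx c hc =>
    rw [mul_assoc, h.cartanProj_mul_of_mem_am hx (h.mul_mem_bpos hc hb),
      h.cartanProj_mul_of_mem_am hx hc, h.proj_zero_mul_of_mem_bpos hc hb, mul_assoc]
  | add a a' _ _ ha ha' => rw [add_mul, map_add, map_add, ha, ha', add_mul]

theorem cartanProj_mem (h : TriangularDecomposition K A 𝒜 Am T Ap) (a : A) :
    h.cartanProj a ∈ T := by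
  have ha : a ∈ Am.toSubmodule * Bpos K A T Ap := h.am_mul_bpos_eq_top ▸ Submodule.mem_top
  induction ha using Submodule.mul_induction_on' with
  | mem_mul_mem x hx c hc =>
    rw [h.cartanProj_mul_of_mem_am hx hc]
    exact T.mul_mem (h.proj_zero_mem_T_of_mem_am hx) (h.proj_zero_mem_T_of_mem_bpos hc)
  | add a a' _ _ ha ha' => rw [map_add]; exact T.add_mem ha ha'

theorem cartanProj_one (h : TriangularDecomposition K A 𝒜 Am T Ap) : h.cartanProj 1 = 1 := by
  have h₁ : proj 𝒜 0 (1 : A) = 1 := decompose_of_mem_same 𝒜 SetLike.GradedOne.one_mem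
  rw [← mul_one 1, h.cartanProj_mul_of_mem_am Am.one_mem (T_le_bpos T.one_mem), h₁, mul_one]

end TriangularDecomposition

abbrev coinducedModule (A V : Type*) [Ring A] [AddCommGroup V] : Module A (A →+ V) where
  smul a g := g.comp (AddMonoidHom.mulRight a)
  one_smul g := AddMonoidHom.ext fun x => congrArg g (mul_one x)
  mul_smul a b g := AddMonoidHom.ext fun x => congrArg g (mul_assoc x a b).symm
  smul_zero _ := rfl
  smul_add _ _ _ := rfl
  add_smul a b g := AddMonoidHom.ext fun x => show g (x * (a + b)) = g (x * a) + g (x * b) by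
    rw [mul_add, map_add]
  zero_smul g := AddMonoidHom.ext fun x => show g (x * 0) = 0 by rw [mul_zero, map_zero]

namespace IsProperStandardFor

variable {K A : Type u} [Field K] [Ring A] [Algebra K A] {𝒜 : ℤ → Submodule K A}
  {Am T Ap : Subalgebra K A} {M : Type u} [AddCommGroup M] [Module T M]
  {D : Type u} [AddCommGroup D] [Module A D] {ι : M →+ D}

theorem injective (hD : IsProperStandardFor K A 𝒜 T Ap M D ι)
    (h : TriangularDecomposition K A 𝒜 Am T Ap) : Function.Injective ι := by
  let _ := h.toGradedAlgebra
  let _ := coinducedModule A M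
  let φ : A →+ T :=
    { toFun a := ⟨h.cartanProj a, h.cartanProj_mem a⟩
      map_zero' := by ext; simp
      map_add' a b := by ext; simp }
  have hφ (a : A) {b : A} (hb : b ∈ Bpos K A T Ap) : (φ (a * b) : A) = φ a * proj 𝒜 0 b :=
    h.cartanProj_mul_of_mem_bpos a hb
  -- `f m = (x ↦ cartanProj x • m)`; right `B⁺`-linearity of `cartanProj` makes `f` a `B⁺`-map.
  let f : M →+ (A →+ M) := ((smulAddHom T M).comp φ).flip
  have hf_smul (t : T) (m : M) : f (t • m) = (t : A) • f m := by
    ext x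
    change φ x • t • m = φ (x * t) • m
    rw [← mul_smul]
    congr 1
    ext
    rw [hφ x (TriangularDecomposition.T_le_bpos t.2), proj_apply,
      decompose_of_mem_same 𝒜 (h.T_deg0 t.2)]
    rfl
  have hf_jpos (a : A) (ha : a ∈ Jpos K A 𝒜 T Ap) (m : M) : a • f m = 0 := by
    ext x
    change φ (x * a) • m = 0
    have hxa : φ (x * a) = 0 := Subtype.ext <| by
      rw [hφ x (TriangularDecomposition.jpos_le_bpos ha),
        TriangularDecomposition.proj_zero_eq_zero_of_mem_jpos ha, mul_zero]
      rfl
    rw [hxa, zero_smul]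
  obtain ⟨F, hF, -⟩ := hD.2.2 (A →+ M) f hf_smul hf_jpos
  intro m m' hmm
  have h₁ := congrArg (fun g : A →+ M => g 1) ((hF m).symm.trans ((congrArg F hmm).trans (hF m')))
  have hφ₁ : φ 1 = 1 := Subtype.ext h.cartanProj_one
  simpa [f, hφ₁] using h₁

theorem smul_apply_of_mem_bpos [GradedAlgebra 𝒜] (hD : IsProperStandardFor K A 𝒜 T Ap M D ι)
    (h : TriangularDecomposition K A 𝒜 Am T Ap) {b : A} (hb : b ∈ Bpos K A T Ap) (m : M) :
    b • ι m = ι ((⟨proj 𝒜 0 b, h.proj_zero_mem_T_of_mem_bpos hb⟩ : T) • m) :=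
  calc b • ι m = (b - proj 𝒜 0 b) • ι m + proj 𝒜 0 b • ι m := by rw [← add_smul, sub_add_cancel]
    _ = _ := by rw [hD.2.1 _ (h.sub_proj_zero_mem_jpos hb), zero_add, hD.1]

theorem span_range_eq_top (hD : IsProperStandardFor K A 𝒜 T Ap M D ι) :
    Submodule.span A (Set.range ι) = ⊤ := by
  set S := Submodule.span A (Set.range ι)
  let f : M →+ S :=
    { toFun m := ⟨ι m, Submodule.subset_span (Set.mem_range_self m)⟩
      map_zero' := by ext; simp
      map_add' m m' := by ext; simp }
  obtain ⟨F, hF, -⟩ :=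
    hD.2.2 S f (fun t m => Subtype.ext (hD.1 t m)) (fun a ha m => Subtype.ext (hD.2.1 a ha m))
  have hF' : S.subtype ∘ₗ F = LinearMap.id :=
    (hD.2.2 D ι hD.1 hD.2.1).unique (fun m => congrArg Subtype.val (hF m)) (fun _ => rfl)
  refine eq_top_iff.mpr fun x _ => ?_
  exact (congrArg (· x) hF' : S.subtype (F x) = x) ▸ (F x).2

section Grading

open scoped Pointwise

variable [Module K D] [IsScalarTower K A D] [GradedAlgebra 𝒜]

theorem mem_span_am_smul_range (hD : IsProperStandardFor K A 𝒜 T Ap M D ι)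
    (h : TriangularDecomposition K A 𝒜 Am T Ap) (z : D) :
    z ∈ Submodule.span K ((Am : Set A) • Set.range ι) := by
  set S := Submodule.span K ((Am : Set A) • Set.range ι)
  have hS (a : A) (m : M) : a • ι m ∈ S := by
    have ha : a ∈ Am.toSubmodule * Bpos K A T Ap := h.am_mul_bpos_eq_top ▸ Submodule.mem_top
    induction ha using Submodule.mul_induction_on' with
    | mem_mul_mem x hx c hc =>
      rw [mul_smul, hD.smul_apply_of_mem_bpos h hc]
      exact Submodule.subset_span (Set.smul_mem_smul hx (Set.mem_range_self _))
    | add a a' _ _ ha ha' => rw [add_smul]; exact add_mem ha ha'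
  let SA : Submodule A D :=
    { S.toAddSubmonoid with
      smul_mem' a z hz := by
        induction hz using Submodule.span_induction with
        | mem z hz =>
          obtain ⟨x, -, _, ⟨m, rfl⟩, rfl⟩ := hz
          rw [smul_smul]
          exact hS _ m
        | zero => rw [smul_zero]; exact zero_mem S
        | add z w _ _ hz hw => rw [smul_add]; exact S.add_mem hz hw
        | smul c z _ hz => rw [smul_comm]; exact S.smul_mem c hz }
  have hSA : Submodule.span A (Set.range ι) ≤ SA :=
    Submodule.span_le.mpr <| by rintro _ ⟨m, rfl⟩; exact one_smul A (ι m) ▸ hS 1 m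
  exact hSA (hD.span_range_eq_top ▸ Submodule.mem_top)

variable (ℳ : ℤ → Submodule K D) [Decomposition ℳ] [SetLike.GradedSMul 𝒜 ℳ] {d : ℤ}

theorem coe_decompose_mem_span (hD : IsProperStandardFor K A 𝒜 T Ap M D ι)
    (h : TriangularDecomposition K A 𝒜 Am T Ap) (hι : ∀ m, ι m ∈ ℳ d) (z : D) (j : ℤ) :
    (decompose ℳ z j : D) ∈
      Submodule.span K (((Am.toSubmodule ⊓ 𝒜 (j - d) : Submodule K A) : Set A) • Set.range ι) := by
  have hz := hD.mem_span_am_smul_range h z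
  induction hz using Submodule.span_induction with
  | mem z hz =>
    obtain ⟨x, hx, _, ⟨m, rfl⟩, rfl⟩ := hz
    have hxm := coe_decompose_smul_add_of_right_mem 𝒜 ℳ (hι m) x (j - d)
    rw [sub_add_cancel] at hxm
    rw [hxm]
    exact Submodule.subset_span <| Set.smul_mem_smul
      ⟨isHomogeneous_of_eq_iSup_inf 𝒜 h.neg_graded _ hx, SetLike.coe_mem _⟩ (Set.mem_range_self m)
  | zero => simp
  | add z w _ _ hz hw =>
    rw [decompose_add, DirectSum.add_apply, Submodule.coe_add]; exact add_mem hz hw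
  | smul c z _ hz =>
    rw [decompose_smul, DirectSum.smul_apply, Submodule.coe_smul]; exact Submodule.smul_mem _ c hz

theorem grade_eq_bot_of_inf_eq_bot (hD : IsProperStandardFor K A 𝒜 T Ap M D ι)
    (h : TriangularDecomposition K A 𝒜 Am T Ap) (hι : ∀ m, ι m ∈ ℳ d) {j : ℤ}
    (hj : Am.toSubmodule ⊓ 𝒜 (j - d) = ⊥) : ℳ j = ⊥ := by
  refine eq_bot_iff.mpr fun z hz => ?_
  rw [← decompose_of_mem_same ℳ hz]
  refine Submodule.span_le.mpr ?_ (hD.coe_decompose_mem_span ℳ h hι z j)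
  rintro _ ⟨x, hx, _, ⟨m, rfl⟩, rfl⟩
  rw [hj] at hx
  simp [show x = 0 from hx]

theorem grade_eq_bot_of_lt (hD : IsProperStandardFor K A 𝒜 T Ap M D ι)
    (h : TriangularDecomposition K A 𝒜 Am T Ap) (hι : ∀ m, ι m ∈ ℳ d) {j : ℤ} (hj : d < j) :
    ℳ j = ⊥ :=
  hD.grade_eq_bot_of_inf_eq_bot ℳ h hι (h.am_inf_eq_bot_of_pos (by omega))

theorem grade_eq_range (hD : IsProperStandardFor K A 𝒜 T Ap M D ι)
    (h : TriangularDecomposition K A 𝒜 Am T Ap) (hι : ∀ m, ι m ∈ ℳ d) :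
    (ℳ d : Set D) = Set.range ι := by
  refine subset_antisymm (fun z hz => ?_) (Set.range_subset_iff.mpr hι)
  let R : Submodule K D :=
    { carrier := Set.range ι
      add_mem' := by rintro _ _ ⟨m, rfl⟩ ⟨m', rfl⟩; exact ⟨m + m', map_add ι m m'⟩
      zero_mem' := ⟨0, map_zero ι⟩
      smul_mem' := by
        rintro c _ ⟨m, rfl⟩
        exact ⟨algebraMap K T c • m, (hD.1 _ m).trans (algebraMap_smul A c (ι m))⟩ }
  rw [← decompose_of_mem_same ℳ hz]
  refine (Submodule.span_le (p := R)).mpr ?_ (hD.coe_decompose_mem_span ℳ h hι z d)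
  rintro _ ⟨x, hx, _, ⟨m, rfl⟩, rfl⟩
  rw [sub_self, h.neg_deg0] at hx
  have hxT : x ∈ T.toSubmodule :=
    Submodule.span_le.mpr (Set.singleton_subset_iff.mpr T.one_mem) hx
  exact ⟨(⟨x, hxT⟩ : T) • m, hD.1 _ m⟩

theorem iota_mem_sup_of_coe_decompose_ne_zero [IsSimpleModule T M]
    (hD : IsProperStandardFor K A 𝒜 T Ap M D ι) (h : TriangularDecomposition K A 𝒜 Am T Ap)
    (hι : ∀ m, ι m ∈ ℳ d) (N : Submodule A D) {x : D} (hx : x ∈ N)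
    (hxd : (decompose ℳ x d : D) ≠ 0) (m : M) :
    ι m ∈ N.restrictScalars K ⊔ ⨆ j < d, ℳ j := by
  let P : Submodule T M :=
    { carrier := {m | ∃ n ∈ N, (decompose ℳ n d : D) = ι m}
      add_mem' := by
        rintro m m' ⟨n, hn, hnm⟩ ⟨n', hn', hnm'⟩
        refine ⟨n + n', N.add_mem hn hn', ?_⟩
        rw [decompose_add, DirectSum.add_apply, Submodule.coe_add, hnm, hnm', map_add]
      zero_mem' := ⟨0, N.zero_mem, by simp⟩
      smul_mem' := by
        rintro t m ⟨n, hn, hnm⟩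
        refine ⟨(t : A) • n, N.smul_mem _ hn, ?_⟩
        have htn := coe_decompose_smul_add_of_left_mem 𝒜 ℳ (h.T_deg0 t.2) n d
        rw [zero_add] at htn
        rw [htn, hnm, hD.1] }
  have hP : P = ⊤ := by
    refine (IsSimpleOrder.eq_bot_or_eq_top P).resolve_left fun hP => hxd ?_
    obtain ⟨m₀, hm₀⟩ : (decompose ℳ x d : D) ∈ Set.range ι :=
      hD.grade_eq_range ℳ h hι ▸ SetLike.coe_mem _
    have hm₀P : m₀ ∈ P := ⟨x, hx, hm₀.symm⟩
    rw [hP, Submodule.mem_bot] at hm₀P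
    rw [← hm₀, hm₀P, map_zero]
  obtain ⟨n, hn, hnm⟩ : m ∈ P := hP ▸ Submodule.mem_top
  rw [← hnm, ← sub_sub_cancel n (decompose ℳ n d : D)]
  refine sub_mem (Submodule.mem_sup_left hn) (Submodule.mem_sup_right ?_)
  have hle : ⨆ i ≠ d, ℳ i ≤ ⨆ j < d, ℳ j := iSup₂_le fun i hi => by
    rcases hi.lt_or_gt with hlt | hgt
    · exact le_iSup₂_of_le i hlt le_rfl
    · rw [hD.grade_eq_bot_of_lt ℳ h hι hgt]
      exact bot_le
  exact hle (sub_decompose_mem_iSup_ne ℳ n d)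

theorem grade_le_sup_iSup_lt (hD : IsProperStandardFor K A 𝒜 T Ap M D ι)
    (h : TriangularDecomposition K A 𝒜 Am T Ap) (hι : ∀ m, ι m ∈ ℳ d) (N : Submodule A D)
    (hN : ∀ m, ι m ∈ N.restrictScalars K ⊔ ⨆ j < d, ℳ j) (k : ℤ) :
    ℳ k ≤ N.restrictScalars K ⊔ ⨆ j < k, ℳ j := by
  intro z hz
  rw [← decompose_of_mem_same ℳ hz]
  refine Submodule.span_le.mpr ?_ (hD.coe_decompose_mem_span ℳ h hι z k)
  rintro _ ⟨x, ⟨-, hx⟩, _, ⟨m, rfl⟩, rfl⟩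
  change x • ι m ∈ N.restrictScalars K ⊔ ⨆ j < k, ℳ j
  obtain ⟨n, hn, w, hw, hnw⟩ := Submodule.mem_sup.mp (hN m)
  rw [← hnw, smul_add]
  refine add_mem (Submodule.mem_sup_left (N.smul_mem x hn)) (Submodule.mem_sup_right ?_)
  simpa using smul_mem_iSup_lt hx hw

theorem eq_top_of_iota_mem_sup [FiniteDimensional K A]
    (hD : IsProperStandardFor K A 𝒜 T Ap M D ι) (h : TriangularDecomposition K A 𝒜 Am T Ap)
    (hι : ∀ m, ι m ∈ ℳ d) (N : Submodule A D)
    (hN : ∀ m, ι m ∈ N.restrictScalars K ⊔ ⨆ j < d, ℳ j) : N = ⊤ := by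
  have htop (k : ℤ) (hk : k ≤ d + 1) : ⊤ ≤ N.restrictScalars K ⊔ ⨆ j < k, ℳ j := by
    induction k, hk using Int.leInductionDown with
    | base =>
      refine le_sup_of_le_right ?_
      rw [← (Decomposition.isInternal ℳ).submodule_iSup_eq_top]
      refine iSup_le fun j => ?_
      rcases lt_or_ge j (d + 1) with hj | hj
      · exact le_iSup₂_of_le j hj le_rfl
      · rw [hD.grade_eq_bot_of_lt ℳ h hι (by omega)]
        exact bot_le
    | pred k hk ih =>
      have hle := iSup_lt_add_one_le ℳ (k - 1)
      rw [sub_add_cancel] at hle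
      exact ih.trans <| sup_le le_sup_left <|
        hle.trans (sup_le le_sup_right (hD.grade_le_sup_iSup_lt ℳ h hι N hN (k - 1)))
  -- `ℳ j` is spanned by `A_{j-d} • ι(λ)`, so the grading of `D` is bounded below like that of `A`.
  obtain ⟨n, hn⟩ := exists_forall_le_eq_bot h.internal.submodule_iSupIndep
  have hlow : ⨆ j < d + min n 0, ℳ j = ⊥ := iSup₂_eq_bot.mpr fun j hj =>
    hD.grade_eq_bot_of_inf_eq_bot ℳ h hι <|
      eq_bot_iff.mpr (inf_le_right.trans (hn _ (by omega)).le)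
  have := htop (d + min n 0) (by omega)
  rwa [hlow, sup_bot_eq, top_le_iff, Submodule.restrictScalars_eq_top_iff] at this

theorem eq_top_of_coe_decompose_ne_zero [FiniteDimensional K A] [IsSimpleModule T M]
    (hD : IsProperStandardFor K A 𝒜 T Ap M D ι) (h : TriangularDecomposition K A 𝒜 Am T Ap)
    (hι : ∀ m, ι m ∈ ℳ d) (N : Submodule A D) {x : D} (hx : x ∈ N)
    (hxd : (decompose ℳ x d : D) ≠ 0) : N = ⊤ :=
  hD.eq_top_of_iota_mem_sup ℳ h hι N (hD.iota_mem_sup_of_coe_decompose_ne_zero ℳ h hι N hx hxd)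

theorem coe_decompose_eq_zero_of_mem_sSup_ne_top [FiniteDimensional K A] [IsSimpleModule T M]
    (hD : IsProperStandardFor K A 𝒜 T Ap M D ι) (h : TriangularDecomposition K A 𝒜 Am T Ap)
    (hι : ∀ m, ι m ∈ ℳ d) {x : D} (hx : x ∈ sSup {N : Submodule A D | N ≠ ⊤}) :
    (decompose ℳ x d : D) = 0 := by
  rw [sSup_eq_iSup'] at hx
  induction hx using Submodule.iSup_induction' with
  | mem N x hx =>
    exact not_not.mp fun hxd => N.2 (hD.eq_top_of_coe_decompose_ne_zero ℳ h hι N hx hxd)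
  | zero => simp
  | add x y _ _ hx hy =>
    rw [decompose_add, DirectSum.add_apply, Submodule.coe_add, hx, hy, add_zero]

end Grading

end IsProperStandardFor

/-- Let `λ` be a simple graded `T`-module concentrated in degree `d`.
Then the proper standard module `Δ̄(λ)` has a simple head `L(λ)` (it has a unique
maximal `A`-submodule `rad`), the degree-`d` component of `L(λ) = Δ̄(λ)/rad` is
isomorphic to `λ` as a `T`-module, and `L(λ)` is supported in degrees `≤ d`. -/
theorem properStandard_simple_head (K A : Type u) [Field K] [Ring A] [Algebra K A]
    [FiniteDimensional K A] (𝒜 : ℤ → Submodule K A) (Am T Ap : Subalgebra K A)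
    (h : TriangularDecomposition K A 𝒜 Am T Ap)
    (d : ℤ) (M : Type u) [AddCommGroup M] [Module ↥T M] [IsSimpleModule ↥T M]
    (D : Type u) [AddCommGroup D] [Module A D] [Module K D] [IsScalarTower K A D]
    (ι : M →+ D) (hD : IsProperStandardFor K A 𝒜 T Ap M D ι)
    (ℳ : ℤ → Submodule K D) (hℳ : IsModuleGrading K A 𝒜 ℳ)
    (hι : ∀ m : M, ι m ∈ ℳ d) :
    ∃ rad : Submodule A D,
      -- `rad` is the unique maximal submodule, so the head `L(λ) = Δ̄(λ)/rad` is simple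
      rad ≠ ⊤ ∧ (∀ N : Submodule A D, N ≠ ⊤ → N ≤ rad) ∧
      -- the degree-`d` component of `L(λ)` is isomorphic to `λ` as a `T`-module
      (∃ e : M →+ (D ⧸ rad), Function.Injective e ∧
        (Set.range e = (rad.mkQ '' (ℳ d : Set D))) ∧
        ∀ (t : ↥T) (m : M), e (t • m) = (t : A) • e m) ∧
      -- `L(λ)` is supported in degrees `≤ d`
      (∀ i : ℤ, d < i → rad.mkQ '' (ℳ i : Set D) = {0}) := by
  let _ := h.toGradedAlgebra
  let _ := hℳ.1.chooseDecomposition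
  have : SetLike.GradedSMul 𝒜 ℳ := ⟨fun i j _ _ ha hx => hℳ.2 i j _ _ ha hx⟩
  set rad := sSup {N : Submodule A D | N ≠ ⊤}
  have hrad (m : M) (hm : ι m ∈ rad) : m = 0 := by
    have hm' := hD.coe_decompose_eq_zero_of_mem_sSup_ne_top ℳ h hι hm
    rw [decompose_of_mem_same ℳ (hι m)] at hm'
    exact hD.injective h (hm'.trans (map_zero ι).symm)
  have := IsSimpleModule.nontrivial T M
  obtain ⟨m₀, hm₀⟩ := exists_ne (0 : M)
  refine ⟨rad, fun htop => hm₀ (hrad m₀ (htop ▸ Submodule.mem_top)), fun N hN => le_sSup hN,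
    ⟨rad.mkQ.toAddMonoidHom.comp ι, ?_, ?_, fun t m => ?_⟩, fun i hi => ?_⟩
  · refine (injective_iff_map_eq_zero _).mpr fun m hm => hrad m ?_
    simpa [Submodule.Quotient.mk_eq_zero] using hm
  · rw [AddMonoidHom.coe_comp, Set.range_comp, hD.grade_eq_range ℳ h hι]
    rfl
  · simp [hD.1]
  · rw [hD.grade_eq_bot_of_lt ℳ h hι hi]
    simp

end TriangularPaper
end

section
/- Let A be a finite-dimensional Z-graded K-algebra with triangular decomposition (A⁻,T,A⁺). Then every simple A-module L(λ) is absolutely simple, i.e., End_A(L(λ)) = K; in particular A is a split K-algebra. -/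
open scoped TensorProduct

universe u

/-!
The parts `A_{>0}` and `A_{<0}` of positive and negative degree are nilpotent subspaces, since
the grading of the finite-dimensional algebra `A` is bounded, and the triangular decomposition
gives `A = (K + A_{<0}) T (K + A_{>0})`. In a simple `A`-module `S`, the vectors killed by `A_{>0}`
form a nonzero `T`-submodule; let `L` be a simple `T`-submodule of it. Then `S = A L = L + D` with
`D = A_{<0} S`, and `D ≠ S` by nilpotency, so `S / D` is a nonzero quotient of `L`, hence a simple
`T`-module. An `A`-endomorphism `f` preserves `D` and so induces a `T`-endomorphism of `S / D`,
which is a scalar `c` because `T` is split. Thus `f - c` maps `S` into `D ≠ S`, and by Schur's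
lemma `f = c`.
-/

namespace TriangularPaper

section NilpotentSubspace

variable {K A M : Type*} [CommRing K] [Ring A] [Algebra K A] [AddCommGroup M] [Module K M]
  [Module A M] [IsScalarTower K A M]

theorem mul_smul_eq_smul_smul (I J : Submodule K A) (N : Submodule K M) :
    (I * J) • N = I • J • N :=
  Submodule.smul_assoc I J N

theorem pow_succ_smul (P : Submodule K A) (N : Submodule K M) (n : ℕ) :
    P ^ (n + 1) • N = P • P ^ n • N := by
  rw [pow_succ', mul_smul_eq_smul_smul]

theorem smul_top_ne_top_of_isNilpotent [Nontrivial M] {P : Submodule K A} (hP : IsNilpotent P) :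
    P • (⊤ : Submodule K M) ≠ ⊤ := by
  intro hPM
  obtain ⟨n, hn⟩ := hP
  have hpow : ∀ k : ℕ, P ^ k • (⊤ : Submodule K M) = ⊤ := by
    intro k
    induction k with
    | zero => exact Submodule.one_smul _
    | succ k ih => rw [pow_succ_smul, ih, hPM]
  apply bot_ne_top (α := Submodule K M)
  rw [← hpow n, hn, Submodule.zero_eq_bot, Submodule.bot_smul]

theorem exists_ne_zero_forall_smul_eq_zero_of_isNilpotent [Nontrivial M] {P : Submodule K A}
    (hP : IsNilpotent P) : ∃ x : M, x ≠ 0 ∧ ∀ a ∈ P, a • x = 0 := by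
  by_contra! hfaithful
  obtain ⟨n, hn⟩ := hP
  have hpow : ∀ k : ℕ, P ^ k • (⊤ : Submodule K M) ≠ ⊥ := by
    intro k
    induction k with
    | zero => rw [pow_zero, Submodule.one_smul]; exact top_ne_bot
    | succ k ih =>
      obtain ⟨x, hx, hx0⟩ := (Submodule.ne_bot_iff _).mp ih
      obtain ⟨a, ha, hax⟩ := hfaithful x hx0
      rw [pow_succ_smul]
      exact (Submodule.ne_bot_iff _).mpr ⟨a • x, Submodule.smul_mem_smul ha hx, hax⟩
  exact hpow n (by rw [hn, Submodule.zero_eq_bot, Submodule.bot_smul])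

theorem top_smul_eq_top_of_ne_bot [IsSimpleModule A M] {L : Submodule K M} (hL : L ≠ ⊥) :
    (⊤ : Submodule K A) • L = ⊤ := by
  obtain ⟨v, hv, hv0⟩ := (Submodule.ne_bot_iff L).mp hL
  refine Submodule.eq_top_iff'.mpr fun x => ?_
  obtain ⟨a, rfl⟩ := IsSimpleModule.toSpanSingleton_surjective A hv0 x
  exact Submodule.smul_mem_smul Submodule.mem_top hv

theorem exists_isSimpleModule_smul_eq_bot_of_isNilpotent [Nontrivial M] [IsArtinian K M]
    (T : Subalgebra K A) {P : Submodule K A} (hP : IsNilpotent P) (hPT : P * T.toSubmodule ≤ P) :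
    ∃ L : Submodule T M, IsSimpleModule T L ∧ P • L.restrictScalars K = ⊥ := by
  let H : Submodule T M :=
    { carrier := {x | ∀ a ∈ P, a • x = 0}
      add_mem' := fun hx hy a ha => by rw [smul_add, hx a ha, hy a ha, add_zero]
      zero_mem' := fun a _ => smul_zero a
      smul_mem' := fun t x hx a ha => by
        rw [Subalgebra.smul_def, ← mul_smul]
        exact hx _ (hPT (Submodule.mul_mem_mul ha t.2)) }
  have : IsArtinian T M := isArtinian_of_tower K inferInstance
  obtain ⟨x, hx0, hx⟩ := exists_ne_zero_forall_smul_eq_zero_of_isNilpotent (M := M) hP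
  obtain hH | ⟨L, hL, hLH⟩ := eq_bot_or_exists_atom_le H
  · exact absurd ((Submodule.mem_bot T).mp (hH ▸ hx : x ∈ (⊥ : Submodule T M))) hx0
  · refine ⟨L, isSimpleModule_iff_isAtom.mpr hL, eq_bot_iff.mpr (Submodule.smul_le.mpr ?_)⟩
    exact fun a ha y hy => (Submodule.mem_bot K).mpr (hLH hy a ha)

end NilpotentSubspace

section Grading

variable {K A : Type*} [CommRing K] [Ring A] [Algebra K A] (𝒜 : ℤ → Submodule K A)

def degreeGE (n : ℤ) : Submodule K A :=
  ⨆ (i : ℤ) (_ : n ≤ i), 𝒜 i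

variable {𝒜}

theorem le_degreeGE {n i : ℤ} (h : n ≤ i) : 𝒜 i ≤ degreeGE 𝒜 n :=
  le_iSup₂ (f := fun i (_ : n ≤ i) => 𝒜 i) i h

theorem degreeGE_mul_le (hmul : ∀ i j : ℤ, ∀ a b : A, a ∈ 𝒜 i → b ∈ 𝒜 j → a * b ∈ 𝒜 (i + j))
    (m n : ℤ) : degreeGE 𝒜 m * degreeGE 𝒜 n ≤ degreeGE 𝒜 (m + n) := by
  simp only [degreeGE, Submodule.iSup_mul, Submodule.mul_iSup]
  refine iSup₂_le fun j hj => iSup₂_le fun i hi => ?_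
  exact (Submodule.mul_le.mpr fun a ha b hb => hmul i j a b ha hb).trans
    (le_degreeGE (n := m + n) (by omega))

theorem degreeGE_one_pow_le (hmul : ∀ i j : ℤ, ∀ a b : A, a ∈ 𝒜 i → b ∈ 𝒜 j → a * b ∈ 𝒜 (i + j))
    (n : ℕ) : degreeGE 𝒜 1 ^ (n + 1) ≤ degreeGE 𝒜 (n + 1) := by
  induction n with
  | zero => simp
  | succ n ih =>
    rw [pow_succ]
    exact (mul_le_mul_left ih _).trans (by exact_mod_cast degreeGE_mul_le hmul (n + 1) 1)

theorem isNilpotent_degreeGE_one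
    (hmul : ∀ i j : ℤ, ∀ a b : A, a ∈ 𝒜 i → b ∈ 𝒜 j → a * b ∈ 𝒜 (i + j))
    (hfin : {i | 𝒜 i ≠ ⊥}.Finite) : IsNilpotent (degreeGE 𝒜 1) := by
  obtain ⟨B, hB⟩ := hfin.bddAbove
  refine ⟨B.toNat + 1, ?_⟩
  rw [Submodule.zero_eq_bot, eq_bot_iff]
  refine (degreeGE_one_pow_le hmul _).trans (iSup₂_le fun i hi => ?_)
  by_contra hne
  have := hB (show 𝒜 i ≠ ⊥ from fun h => hne (le_bot_iff.mpr h))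
  omega

theorem degreeGE_mul_le_self
    (hmul : ∀ i j : ℤ, ∀ a b : A, a ∈ 𝒜 i → b ∈ 𝒜 j → a * b ∈ 𝒜 (i + j)) (n : ℤ)
    {B : Submodule K A} (hB : B ≤ 𝒜 0) : degreeGE 𝒜 n * B ≤ degreeGE 𝒜 n := by
  simpa using (mul_le_mul_right (hB.trans (le_degreeGE le_rfl)) _).trans (degreeGE_mul_le hmul n 0)

theorem mul_degreeGE_le_self
    (hmul : ∀ i j : ℤ, ∀ a b : A, a ∈ 𝒜 i → b ∈ 𝒜 j → a * b ∈ 𝒜 (i + j)) (n : ℤ)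
    {B : Submodule K A} (hB : B ≤ 𝒜 0) : B * degreeGE 𝒜 n ≤ degreeGE 𝒜 n := by
  simpa using (mul_le_mul_left (hB.trans (le_degreeGE le_rfl)) _).trans (degreeGE_mul_le hmul 0 n)

theorem le_one_sup_degreeGE_one (hind : iSupIndep 𝒜) {B : Submodule K A}
    (hgr : B = ⨆ i, B ⊓ 𝒜 i) (hsupp : B ≤ ⨆ n : ℕ, 𝒜 n)
    (h0 : B ⊓ 𝒜 0 = Submodule.span K {1}) : B ≤ 1 ⊔ degreeGE 𝒜 1 := by
  rw [hgr]
  refine iSup_le fun i => ?_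
  rcases lt_trichotomy i 0 with hi | rfl | hi
  · have hdisj := hind.disjoint_biSup (y := Set.range ((↑) : ℕ → ℤ)) (x := i)
      (by rintro ⟨n, hn⟩; omega)
    rw [iSup_range] at hdisj
    rw [disjoint_iff.mp (hdisj.symm.mono_left hsupp)]
    exact bot_le
  · rw [h0, ← Submodule.one_eq_span]
    exact le_sup_left
  · exact inf_le_right.trans ((le_degreeGE (by omega)).trans le_sup_right)

end Grading

theorem triMulMap_mem_mul {K A : Type u} [Field K] [Ring A] [Algebra K A]
    (P Q R : Submodule K A) (ξ : (↥P ⊗[K] ↥Q) ⊗[K] ↥R) : triMulMap K A P Q R ξ ∈ P * Q * R := by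
  induction ξ using TensorProduct.induction_on with
  | zero => simp
  | add _ _ h₁ h₂ => rw [map_add]; exact add_mem h₁ h₂
  | tmul ζ r =>
    induction ζ using TensorProduct.induction_on with
    | zero => simp
    | add _ _ h₁ h₂ => rw [TensorProduct.add_tmul, map_add]; exact add_mem h₁ h₂
    | tmul p q =>
      simpa [triMulMap, mulMap] using
        Submodule.mul_mem_mul (Submodule.mul_mem_mul p.2 q.2) r.2

theorem isSimpleModule_quotient_of_sup_eq_top {R M : Type*} [Ring R] [AddCommGroup M]
    [Module R M] {L D : Submodule R M} (hL : IsSimpleModule R L) (hD : D ≠ ⊤) (hLD : L ⊔ D = ⊤) :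
    IsSimpleModule R (M ⧸ D) := by
  have : Nontrivial (M ⧸ D) := Submodule.Quotient.nontrivial_iff.mpr hD
  let e : L →ₗ[R] M ⧸ D := D.mkQ ∘ₗ L.subtype
  have he : Function.Surjective e := by
    rintro ⟨s⟩
    obtain ⟨x, hx, d, hd, rfl⟩ := Submodule.mem_sup.mp (hLD ▸ Submodule.mem_top : s ∈ L ⊔ D)
    exact ⟨⟨x, hx⟩, (Submodule.Quotient.eq D).mpr (by simpa using D.neg_mem hd)⟩
  have he' : Function.Injective e := e.injective_or_eq_zero.resolve_right fun h0 => by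
    obtain ⟨x, hx⟩ := exists_ne (0 : M ⧸ D)
    obtain ⟨y, rfl⟩ := he x
    exact hx (by simp [h0])
  exact IsSimpleModule.congr (LinearEquiv.ofBijective e ⟨he', he⟩).symm

section Factorization

variable {K A : Type*} {S : Type u} [Field K] [Ring A] [Algebra K A] [AddCommGroup S] [Module K S]
  [Module A S] [IsScalarTower K A S] {T : Subalgebra K A} {N P : Submodule K A}

theorem factorization_smul_le {L : Submodule K S} (hTL : T.toSubmodule • L ≤ L)
    (hPL : P • L = ⊥) : ((1 ⊔ N) * T.toSubmodule * (1 ⊔ P)) • L ≤ L ⊔ N • ⊤ := by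
  rw [mul_smul_eq_smul_smul, mul_smul_eq_smul_smul, Submodule.sup_smul (1 : Submodule K A) P,
    Submodule.one_smul, hPL, sup_bot_eq, Submodule.sup_smul, Submodule.one_smul]
  exact sup_le_sup hTL (Submodule.smul_mono le_rfl le_top)

theorem exists_eq_algebraMap_smul_of_factorization [FiniteDimensional K A] [IsSimpleModule A S]
    (hsplit : ∀ (V : Type u) [AddCommGroup V] [Module T V], IsSimpleModule T V →
      ∀ g : V →ₗ[T] V, ∃ c : K, ∀ v, g v = algebraMap K T c • v)
    (hN : IsNilpotent N) (hP : IsNilpotent P) (hTN : T.toSubmodule * N ≤ N)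
    (hPT : P * T.toSubmodule ≤ P) (hA : (1 ⊔ N) * T.toSubmodule * (1 ⊔ P) = ⊤)
    (f : S →ₗ[A] S) : ∃ c : K, ∀ x, f x = algebraMap K A c • x := by
  have : Nontrivial S := IsSimpleModule.nontrivial A S
  have : FiniteDimensional K S := Module.Finite.trans A S
  obtain ⟨L, hL, hPL⟩ := exists_isSimpleModule_smul_eq_bot_of_isNilpotent (M := S) T hP hPT
  have hTD : T.toSubmodule • (N • ⊤ : Submodule K S) ≤ N • ⊤ := by
    rw [← mul_smul_eq_smul_smul]
    exact Submodule.smul_mono_left hTN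
  let D : Submodule T S :=
    { toAddSubmonoid := (N • ⊤ : Submodule K S).toAddSubmonoid
      smul_mem' := fun t x hx => hTD (Submodule.smul_mem_smul t.2 hx) }
  have hDK : D.restrictScalars K = N • ⊤ := rfl
  have hD : D ≠ ⊤ := fun h => smul_top_ne_top_of_isNilpotent (M := S) hN
    (by rw [← hDK, h, Submodule.restrictScalars_top])
  have hLD : L ⊔ D = ⊤ := by
    have hL0 : L.restrictScalars K ≠ ⊥ := by simpa using (isSimpleModule_iff_isAtom.mp hL).1
    have hTL : T.toSubmodule • L.restrictScalars K ≤ L.restrictScalars K :=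
      Submodule.smul_le.mpr fun t ht x hx => L.smul_mem ⟨t, ht⟩ hx
    rw [← Submodule.restrictScalars_eq_top_iff K, Submodule.restrictScalars_sup, hDK, eq_top_iff]
    calc ⊤ = ((1 ⊔ N) * T.toSubmodule * (1 ⊔ P)) • L.restrictScalars K := by
          rw [hA, top_smul_eq_top_of_ne_bot hL0]
      _ ≤ _ := factorization_smul_le hTL hPL
  have hfD : D ≤ D.comap (f.restrictScalars T) := fun x hx =>
    Submodule.smul_induction_on (hx : x ∈ N • ⊤)
      (fun a ha y _ => show f (a • y) ∈ N • ⊤ by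
        rw [map_smul]; exact Submodule.smul_mem_smul ha Submodule.mem_top)
      (fun _ _ h₁ h₂ => add_mem h₁ h₂)
  obtain ⟨c, hc⟩ := hsplit _ (isSimpleModule_quotient_of_sup_eq_top hL hD hLD) (D.mapQ D (f.restrictScalars T) hfD)
  set g := f - algebraMap K (Module.End A S) c
  have hg : ∀ x, g x = f x - algebraMap K A c • x := fun x => by
    simp [g, Module.algebraMap_end_apply, algebraMap_smul]
  have hgD : ∀ x, g x ∈ D := fun x => hg x ▸ (Submodule.Quotient.eq D).mp (hc (D.mkQ x))
  rcases g.bijective_or_eq_zero with hbij | hzero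
  · exact absurd (Submodule.eq_top_iff'.mpr fun s => (hbij.2 s).elim fun x hx => hx ▸ hgD x) hD
  · exact ⟨c, fun x => sub_eq_zero.mp ((hg x).symm.trans (LinearMap.congr_fun hzero x))⟩

end Factorization

/-- If `A` has a triangular decomposition (so in particular `T` is a
split `K`-algebra), then every simple `A`-module is absolutely simple:
`End_A(L(λ)) = K`.  In particular, `A` is a split `K`-algebra. -/
theorem simple_modules_absolutely_simple (K A : Type u) [Field K] [Ring A] [Algebra K A]
    [FiniteDimensional K A] (𝒜 : ℤ → Submodule K A) (Am T Ap : Subalgebra K A)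
    (h : TriangularDecomposition K A 𝒜 Am T Ap)
    (S : Type u) [AddCommGroup S] [Module A S] [IsSimpleModule A S]
    (f : S →ₗ[A] S) : ∃ c : K, ∀ x : S, f x = algebraMap K A c • x := by
  let _ : Module K S := Module.compHom S (algebraMap K A)
  have : IsScalarTower K A S := .of_algebraMap_smul fun _ _ => rfl
  have hind := h.internal.submodule_iSupIndep
  have hfin : {i | 𝒜 i ≠ ⊥}.Finite :=
    Set.finite_coe_iff.mp (@Finite.of_fintype _ hind.fintypeNeBotOfFiniteDimensional)
  -- `degreeGE 𝒜' 1` is the negative part `A_{<0}`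
  set 𝒜' : ℤ → Submodule K A := fun i => 𝒜 (-i)
  have hmul' : ∀ i j : ℤ, ∀ a b : A, a ∈ 𝒜' i → b ∈ 𝒜' j → a * b ∈ 𝒜' (i + j) :=
    fun i j a b ha hb => by
      simpa only [𝒜', neg_add] using h.mul_mem _ _ a b ha hb
  have hAp := le_one_sup_degreeGE_one hind h.pos_graded h.pos_supp h.pos_deg0
  have hAm : Am.toSubmodule ≤ 1 ⊔ degreeGE 𝒜' 1 :=
    le_one_sup_degreeGE_one (hind.comp neg_injective)
      (h.neg_graded.trans ((Equiv.neg ℤ).iSup_comp (g := fun i => Am.toSubmodule ⊓ 𝒜 i)).symm)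
      h.neg_supp (by simpa [𝒜'] using h.neg_deg0)
  refine exists_eq_algebraMap_smul_of_factorization h.T_split
    (isNilpotent_degreeGE_one hmul' (hfin.preimage neg_injective.injOn))
    (isNilpotent_degreeGE_one h.mul_mem hfin)
    (mul_degreeGE_le_self hmul' 1 (by simpa [𝒜'] using h.T_deg0))
    (degreeGE_mul_le_self h.mul_mem 1 h.T_deg0) (eq_top_iff.mpr fun a _ => ?_) f
  obtain ⟨ξ, rfl⟩ := h.mul_bij.2 a
  exact mul_le_mul' (mul_le_mul' hAm le_rfl) hAp (triMulMap_mem_mul _ _ _ ξ)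

end TriangularPaper
end

section
/- Let A be a finite-dimensional Z-graded K-algebra and Φ : A → K a linear map vanishing on Aᵢ for all i ≠ d. Then the kernel of Φ contains no nonzero left ideal of A if and only if it contains no nonzero graded left ideal of A. -/
/-!
If a nonzero left ideal `I` lies in `ker Φ`, pick `a ∈ I` with a nonzero homogeneous component
`aᵢ`. The left ideal `A aᵢ` is graded and nonzero, and it lies in `ker Φ`: since `Φ` only sees
degree `d`, `Φ (y aᵢ) = Φ (y_{d-i} aᵢ) = Φ (y_{d-i} a)`, which vanishes because `y_{d-i} a ∈ I`.
-/

open DirectSum Submodule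

section

variable {ι R A M : Type*} [AddCommGroup ι] [DecidableEq ι] [CommSemiring R] [Semiring A]
  [Algebra R A] (𝒜 : ι → Submodule R A) [GradedAlgebra 𝒜] [AddCommMonoid M] [Module R M]

theorem exists_decompose_ne_zero {a : A} (ha : a ≠ 0) : ∃ i, (decompose 𝒜 a i : A) ≠ 0 := by
  by_contra! h
  refine ha ((decompose 𝒜).injective ?_)
  ext i
  simp [h i]

theorem restrictScalars_span_singleton_eq_iSup_inf {h : A} {i : ι} (hh : h ∈ 𝒜 i) :
    (span A {h}).restrictScalars R = ⨆ k, (span A {h}).restrictScalars R ⊓ 𝒜 k := by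
  refine le_antisymm ?_ (iSup_le fun _ => inf_le_left)
  rintro _ hx
  obtain ⟨y, rfl⟩ := mem_span_singleton.1 hx
  induction y using DirectSum.Decomposition.inductionOn 𝒜 with
  | zero => simp
  | @homogeneous j z =>
    exact mem_iSup_of_mem (j + i) ⟨smul_mem _ _ (mem_span_singleton_self h),
      SetLike.mul_mem_graded z.2 hh⟩
  | add y y' hy hy' =>
    rw [add_smul]
    exact add_mem (hy (smul_mem _ _ (mem_span_singleton_self h)))
      (hy' (smul_mem _ _ (mem_span_singleton_self h)))

variable {𝒜} {d : ι} {Φ : A →ₗ[R] M}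

theorem map_mul_eq_map_mul_decompose (hΦ : ∀ i, i ≠ d → ∀ a ∈ 𝒜 i, Φ a = 0)
    {z : A} {j : ι} (hz : z ∈ 𝒜 j) (a : A) :
    Φ (z * a) = Φ (z * decompose 𝒜 a (d - j)) := by
  induction a using DirectSum.Decomposition.inductionOn 𝒜 with
  | zero => simp
  | @homogeneous k x =>
    by_cases hk : k = d - j
    · subst hk
      rw [decompose_of_mem_same 𝒜 x.2]
    · rw [decompose_of_mem_ne 𝒜 x.2 hk, mul_zero, map_zero]
      exact hΦ _ (fun h => hk (eq_sub_of_add_eq' h)) _ (SetLike.mul_mem_graded hz x.2)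
  | add x x' hx hx' =>
    rw [decompose_add, DirectSum.add_apply, coe_add, mul_add, mul_add, map_add, map_add, hx, hx']

theorem map_mul_eq_map_decompose_mul (hΦ : ∀ i, i ≠ d → ∀ a ∈ 𝒜 i, Φ a = 0)
    {h : A} {i : ι} (hh : h ∈ 𝒜 i) (y : A) :
    Φ (y * h) = Φ (decompose 𝒜 y (d - i) * h) := by
  induction y using DirectSum.Decomposition.inductionOn 𝒜 with
  | zero => simp
  | @homogeneous k x =>
    by_cases hk : k = d - i
    · subst hk
      rw [decompose_of_mem_same 𝒜 x.2]
    · rw [decompose_of_mem_ne 𝒜 x.2 hk, zero_mul, map_zero]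
      exact hΦ _ (fun h => hk (eq_sub_of_add_eq h)) _ (SetLike.mul_mem_graded x.2 hh)
  | add x x' hx hx' =>
    rw [decompose_add, DirectSum.add_apply, coe_add, add_mul, add_mul, map_add, map_add, hx, hx']

end

theorem graded_frobenius_check_general (K A : Type u) [Field K] [Ring A] [Algebra K A]
    (𝒜 : ℤ → Submodule K A) [GradedAlgebra 𝒜]
    (d : ℤ) (Φ : A →ₗ[K] K) (hΦ : ∀ i : ℤ, i ≠ d → ∀ a ∈ 𝒜 i, Φ a = 0) :
    (∀ I : Submodule A A, I ≠ ⊥ → ¬ (I : Set A) ⊆ {a | Φ a = 0}) ↔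
    (∀ I : Submodule A A,
      (Submodule.restrictScalars K I = ⨆ i : ℤ, Submodule.restrictScalars K I ⊓ 𝒜 i) →
      I ≠ ⊥ → ¬ (I : Set A) ⊆ {a | Φ a = 0}) := by
  refine ⟨fun H I _ => H I, fun H I hI hIΦ => ?_⟩
  obtain ⟨a, haI, ha⟩ := exists_mem_ne_zero_of_ne_bot hI
  obtain ⟨i, hi⟩ := exists_decompose_ne_zero 𝒜 ha
  have hai : (decompose 𝒜 a i : A) ∈ 𝒜 i := SetLike.coe_mem _
  refine H _ (restrictScalars_span_singleton_eq_iSup_inf 𝒜 hai) (by simpa using hi) ?_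
  rintro _ hx
  obtain ⟨y, rfl⟩ := mem_span_singleton.1 hx
  calc Φ (y * decompose 𝒜 a i) = Φ (decompose 𝒜 y (d - i) * decompose 𝒜 a i) :=
        map_mul_eq_map_decompose_mul hΦ hai y
    _ = Φ (decompose 𝒜 y (d - i) * a) := by
        rw [map_mul_eq_map_mul_decompose hΦ (SetLike.coe_mem _) a, sub_sub_cancel]
    _ = 0 := hIΦ (I.smul_mem _ haI)

/-- Let `A` be a finite-dimensional `ℤ`-graded `K`-algebra and
`Φ : A → K` a linear map vanishing on `Aᵢ` for all `i ≠ d`.  Then the kernel of `Φ`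
contains no nonzero left ideal of `A` if and only if it contains no nonzero *graded*
left ideal of `A`. -/
theorem graded_frobenius_check (K A : Type u) [Field K] [Ring A] [Algebra K A]
    [FiniteDimensional K A] (𝒜 : ℤ → Submodule K A) [GradedAlgebra 𝒜]
    (d : ℤ) (Φ : A →ₗ[K] K) (hΦ : ∀ i : ℤ, i ≠ d → ∀ a ∈ 𝒜 i, Φ a = 0) :
    (∀ I : Submodule A A, I ≠ ⊥ → ¬ (I : Set A) ⊆ {a | Φ a = 0}) ↔
    (∀ I : Submodule A A,
      (Submodule.restrictScalars K I = ⨆ i : ℤ, Submodule.restrictScalars K I ⊓ 𝒜 i) →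
      I ≠ ⊥ → ¬ (I : Set A) ⊆ {a | Φ a = 0}) :=
  graded_frobenius_check_general K A 𝒜 d Φ hΦ
end

section
/- Let A = K⟨x,y⟩/⟨x², yx, y²⟩ with deg x = −1, deg y = 1. Then (K[x]/(x²), K, K[y]/(y²)) is a triangular decomposition of A (the multiplication map K[x]/(x²) ⊗ K ⊗ K[y]/(y²) → A is an isomorphism), but the opposite-order multiplication map K[y]/(y²) ⊗ K ⊗ K[x]/(x²) → A is not injective, since y ⊗ 1 ⊗ x maps to yx = 0. -/
open scoped TensorProduct

universe u

namespace Stmt16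

variable (K : Type u) [Field K]

noncomputable def x : FreeAlgebra K Bool := FreeAlgebra.ι K false
noncomputable def y : FreeAlgebra K Bool := FreeAlgebra.ι K true

/-- The relations `x² = yx = y² = 0`. -/
inductive Rel : FreeAlgebra K Bool → FreeAlgebra K Bool → Prop
  | xx : Rel (x K * x K) 0
  | yx : Rel (y K * x K) 0
  | yy : Rel (y K * y K) 0

/-- The algebra `A = K⟨x,y⟩/⟨x², yx, y²⟩`. -/
abbrev Aq := RingQuot (Rel K)

noncomputable def ξ : Aq K := RingQuot.mkAlgHom K (Rel K) (x K)
noncomputable def η : Aq K := RingQuot.mkAlgHom K (Rel K) (y K)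

/-- The subalgebra `K[x]/(x²)`. -/
noncomputable def Am : Subalgebra K (Aq K) := Algebra.adjoin K {ξ K}
/-- The subalgebra `K[y]/(y²)`. -/
noncomputable def Ap : Subalgebra K (Aq K) := Algebra.adjoin K {η K}

/-- The grading of `A` with `deg x = -1`, `deg y = 1` (so `A₋₁ = Kx`, `A₀ = K1 ⊕ Kxy`,
`A₁ = Ky`). -/
noncomputable def grading : ℤ → Submodule K (Aq K) := fun i =>
  if i = -1 then Submodule.span K {ξ K}
  else if i = 0 then Submodule.span K {(1 : Aq K), ξ K * η K}
  else if i = 1 then Submodule.span K {η K}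
  else ⊥

/-
`A` has basis `1, x, y, xy`: the relations reduce every product of generators to one of these
(or to `0`), and the representation `x ↦ E₀₁`, `y ↦ E₁₂` on `K³` shows that they are linearly
independent. The basis vectors are homogeneous, of degrees `0, -1, 1, 0`, so the grading is the
decomposition of `A` along the fibres of this degree function. Since `x² = y² = 0`, `A⁻ = K ⊕ Kx`
and `A⁺ = K ⊕ Ky`; the products `a · 1 · b` with `a ∈ {1, x}`, `b ∈ {1, y}` exhaust the basis, so
multiplication `A⁻ ⊗ K ⊗ A⁺ → A` is a surjection between spaces of dimension `4`. In the opposite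
order, the nonzero tensor `y ⊗ 1 ⊗ x` is sent to `yx = 0`.
-/

open Module Submodule
open scoped Pointwise

section General

variable {R B ι κ M : Type*} [CommSemiring R] [Semiring B] [Algebra R B]

theorem _root_.Module.Basis.span_image_inf_span_image [AddCommMonoid M] [Module R M]
    (b : Basis κ R M) (s t : Set κ) :
    span R (b '' s) ⊓ span R (b '' t) = span R (b '' (s ∩ t)) := by
  ext m
  simp only [mem_inf, Basis.mem_span_image, Set.subset_inter_iff]

theorem _root_.Module.Basis.isInternal_span_image_fiber {S : Type*} [Ring S] [AddCommGroup M]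
    [Module S M] [DecidableEq ι] (b : Basis κ S M) (deg : κ → ι) :
    DirectSum.IsInternal fun i => span S (b '' (deg ⁻¹' {i})) := by
  rw [DirectSum.isInternal_submodule_iff_iSupIndep_and_iSup_eq_top]
  refine ⟨fun i => ?_, ?_⟩
  · rw [← span_iUnion₂, ← Set.image_iUnion₂]
    refine b.linearIndependent.disjoint_span_image (Set.disjoint_left.2 ?_)
    simp +contextual [eq_comm]
  · rw [← span_iUnion, ← Set.image_iUnion, ← Set.preimage_iUnion, Set.iUnion_singleton_eq_range,
      Set.range_id', Set.preimage_univ, Set.image_univ, b.span_eq]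

theorem _root_.Submodule.span_eq_iSup_inf_of_forall_exists_mem [AddCommMonoid M] [Module R M]
    (𝒜 : ι → Submodule R M) {S : Set M} (hS : ∀ a ∈ S, ∃ i, a ∈ 𝒜 i) :
    span R S = ⨆ i, span R S ⊓ 𝒜 i := by
  refine le_antisymm (span_le.2 fun a ha => ?_) (iSup_le fun i => inf_le_left)
  obtain ⟨i, hi⟩ := hS a ha
  exact mem_iSup_of_mem i ⟨subset_span ha, hi⟩

theorem _root_.Submodule.mul_mem_of_eq_span [Add ι] {𝒜 : ι → Submodule R B} {s : ι → Set B}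
    (h𝒜 : ∀ i, 𝒜 i = span R (s i)) (hs : ∀ i j, ∀ a ∈ s i, ∀ b ∈ s j, a * b ∈ 𝒜 (i + j))
    {i j : ι} {a b : B} (ha : a ∈ 𝒜 i) (hb : b ∈ 𝒜 j) : a * b ∈ 𝒜 (i + j) := by
  have hle : span R (s i) * span R (s j) ≤ 𝒜 (i + j) := by
    rw [span_mul_span, span_le]
    rintro _ ⟨a, ha, b, hb, rfl⟩
    exact hs i j a ha b hb
  rw [h𝒜] at ha hb
  exact hle (mul_mem_mul ha hb)

theorem _root_.Algebra.toSubmodule_adjoin_le_span {s S : Set B} (hs : s ⊆ S) (h1 : 1 ∈ S)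
    (hS : S * S ⊆ span R S) : Subalgebra.toSubmodule (Algebra.adjoin R s) ≤ span R S := by
  have hmul : ∀ a b : B, a ∈ span R S → b ∈ span R S → a * b ∈ span R S := fun _ _ ha hb =>
    (span_mul_span R S S ▸ span_le.2 hS : span R S * span R S ≤ span R S) (mul_mem_mul ha hb)
  exact Algebra.adjoin_le (S := (span R S).toSubalgebra (subset_span h1) hmul)
    (hs.trans subset_span)

theorem _root_.Algebra.toSubmodule_adjoin_singleton_of_mul_self_eq_zero {a : B} (ha : a * a = 0) :
    Subalgebra.toSubmodule (Algebra.adjoin R {a}) = span R {1, a} := by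
  refine le_antisymm (Algebra.toSubmodule_adjoin_le_span (by simp) (by simp) ?_) ?_
  · rintro _ ⟨b, hb, c, hc, rfl⟩
    simp only [Set.mem_insert_iff, Set.mem_singleton_iff] at hb hc
    rcases hb with rfl | rfl <;> rcases hc with rfl | rfl <;> simp only [one_mul, mul_one, ha] <;>
      first | exact zero_mem _ | exact subset_span (by simp)
  · rw [span_le, Set.insert_subset_iff, Set.singleton_subset_iff]
    exact ⟨(Algebra.adjoin R {a}).one_mem, Algebra.subset_adjoin rfl⟩

theorem _root_.Algebra.surjective_algebraMap_bot :
    Function.Surjective (algebraMap R (⊥ : Subalgebra R B)) := fun r => by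
  obtain ⟨c, hc⟩ := Algebra.mem_bot.1 r.2
  exact ⟨c, Subtype.ext hc⟩

theorem _root_.IsSimpleModule.exists_eq_algebraMap_smul {S V : Type*} [Ring S] [Algebra R S]
    (hS : Function.Surjective (algebraMap R S)) [AddCommGroup V] [Module S V]
    [IsSimpleModule S V] (f : V →ₗ[S] V) : ∃ c : R, ∀ v, f v = algebraMap R S c • v := by
  have := IsSimpleModule.nontrivial S V
  obtain ⟨v₀, hv₀⟩ := exists_ne (0 : V)
  have hspan := IsSimpleModule.span_singleton_eq_top S hv₀
  obtain ⟨r, hr⟩ := mem_span_singleton.1 (hspan ▸ mem_top : f v₀ ∈ span S {v₀})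
  obtain ⟨c, rfl⟩ := hS r
  refine ⟨c, fun v => ?_⟩
  obtain ⟨s, rfl⟩ := mem_span_singleton.1 (hspan ▸ mem_top : v ∈ span S {v₀})
  rw [f.map_smul, ← hr, smul_smul, smul_smul, Algebra.commutes]

variable {K}

theorem _root_.TensorProduct.tmul_ne_zero [AddCommGroup M] [Module K M] {N : Type*}
    [AddCommGroup N] [Module K N] {m : M} {n : N} (hm : m ≠ 0) (hn : n ≠ 0) :
    m ⊗ₜ[K] n ≠ 0 := by
  have hm' : LinearIndependent K fun _ : Unit => m := linearIndependent_unique_iff.2 hm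
  have hn' : LinearIndependent K fun _ : Unit => n := linearIndependent_unique_iff.2 hn
  exact (hm'.tmul_of_flat_left hn').ne_zero ((), ())

theorem _root_.finrank_span_pair_le [AddCommGroup M] [Module K M] (a b : M) :
    finrank K (span K {a, b}) ≤ 2 := by
  classical
  have h := finrank_span_finset_le_card (R := K) ({a, b} : Finset M)
  rw [Set.finrank, Finset.coe_pair] at h
  exact h.trans Finset.card_le_two

variable {A : Type u} [Ring A] [Algebra K A] {M₁ M₂ M₃ : Submodule K A}

theorem _root_.TriangularPaper.triMulMap_tmul (p : M₁) (q : M₂) (r : M₃) :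
    TriangularPaper.triMulMap K A M₁ M₂ M₃ ((p ⊗ₜ q) ⊗ₜ r) = (p : A) * q * r :=
  rfl

theorem _root_.TriangularPaper.mul_mul_mem_range_triMulMap {a b c : A} (ha : a ∈ M₁)
    (hb : b ∈ M₂) (hc : c ∈ M₃) :
    a * b * c ∈ LinearMap.range (TriangularPaper.triMulMap K A M₁ M₂ M₃) :=
  ⟨_, TriangularPaper.triMulMap_tmul ⟨a, ha⟩ ⟨b, hb⟩ ⟨c, hc⟩⟩

theorem _root_.TriangularPaper.not_injective_triMulMap_of_mul_mul_eq_zero {p : M₁} {q : M₂}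
    {r : M₃} (hp : p ≠ 0) (hq : q ≠ 0) (hr : r ≠ 0) (h : (p : A) * q * r = 0) :
    ¬Function.Injective (TriangularPaper.triMulMap K A M₁ M₂ M₃) := fun hinj =>
  TensorProduct.tmul_ne_zero (TensorProduct.tmul_ne_zero hp hq) hr <|
    hinj <| by rw [map_zero, TriangularPaper.triMulMap_tmul, h]

theorem _root_.TriangularPaper.triMulMap_bijective_of_surjective [FiniteDimensional K A]
    (hf : Function.Surjective (TriangularPaper.triMulMap K A M₁ M₂ M₃))
    (h : finrank K M₁ * finrank K M₂ * finrank K M₃ ≤ finrank K A) :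
    Function.Bijective (TriangularPaper.triMulMap K A M₁ M₂ M₃) :=
  OrzechProperty.bijective_of_surjective_of_finrank_le _ hf <| by
    rwa [finrank_tensorProduct, finrank_tensorProduct]

end General

section QuotientAlgebra

variable {K}

@[simp] theorem ξ_mul_ξ : ξ K * ξ K = 0 := by
  simpa [ξ] using RingQuot.mkAlgHom_rel K (Rel.xx (K := K))

@[simp] theorem η_mul_ξ : η K * ξ K = 0 := by
  simpa [ξ, η] using RingQuot.mkAlgHom_rel K (Rel.yx (K := K))

@[simp] theorem η_mul_η : η K * η K = 0 := by
  simpa [η] using RingQuot.mkAlgHom_rel K (Rel.yy (K := K))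

@[simp] theorem ξ_mul_ξ_mul (a : Aq K) : ξ K * (ξ K * a) = 0 := by
  rw [← mul_assoc, ξ_mul_ξ, zero_mul]

@[simp] theorem η_mul_ξ_mul (a : Aq K) : η K * (ξ K * a) = 0 := by
  rw [← mul_assoc, η_mul_ξ, zero_mul]

variable (K) in
noncomputable def matrixRep : Aq K →ₐ[K] Matrix (Fin 3) (Fin 3) K :=
  RingQuot.liftAlgHom K
    ⟨FreeAlgebra.lift K fun b => cond b (Matrix.single 1 2 1) (Matrix.single 0 1 1),
      by rintro _ _ (_ | _ | _) <;> simp [x, y]⟩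

@[simp] theorem matrixRep_ξ : matrixRep K (ξ K) = Matrix.single 0 1 1 := by
  simp [matrixRep, ξ, x]

@[simp] theorem matrixRep_η : matrixRep K (η K) = Matrix.single 1 2 1 := by
  simp [matrixRep, η, y]

theorem linearIndependent_monomials :
    LinearIndependent K ![(1 : Aq K), ξ K, η K, ξ K * η K] := by
  refine LinearIndependent.of_comp (matrixRep K).toLinearMap ?_
  rw [Fintype.linearIndependent_iff]
  intro g hg
  -- the entries `(0,0), (0,1), (1,2), (0,2)` of the combination are the four coefficients
  have h := fun i j => congrFun (congrFun hg i) j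
  have h00 := h 0 0; have h01 := h 0 1; have h12 := h 1 2; have h02 := h 0 2
  simp [Fin.sum_univ_four] at h00 h01 h12 h02
  intro k; fin_cases k <;> assumption

theorem adjoin_ξ_η_eq_top : Algebra.adjoin K {ξ K, η K} = ⊤ := by
  have : {ξ K, η K} = RingQuot.mkAlgHom K (Rel K) '' Set.range (FreeAlgebra.ι K) := by
    ext z
    simp [ξ, η, x, y, eq_comm]
  rw [this, ← AlgHom.map_adjoin, FreeAlgebra.adjoin_range_ι, Algebra.map_top,
    AlgHom.range_eq_top]
  exact RingQuot.mkAlgHom_surjective K _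

theorem span_monomials_eq_top : span K {(1 : Aq K), ξ K, η K, ξ K * η K} = ⊤ := by
  have hS := Algebra.toSubmodule_adjoin_le_span (R := K) (s := {ξ K, η K})
    (S := {(1 : Aq K), ξ K, η K, ξ K * η K}) (by simp [Set.insert_subset_iff]) (by simp) ?_
  · rwa [adjoin_ξ_η_eq_top, Algebra.top_toSubmodule, top_le_iff] at hS
  rintro _ ⟨a, ha, b, hb, rfl⟩
  simp only [Set.mem_insert_iff, Set.mem_singleton_iff] at ha hb
  rcases ha with rfl | rfl | rfl | rfl <;> rcases hb with rfl | rfl | rfl | rfl <;>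
    simp only [one_mul, mul_one, mul_assoc, ξ_mul_ξ, η_mul_ξ, η_mul_η, ξ_mul_ξ_mul, η_mul_ξ_mul,
      mul_zero] <;>
    first | exact zero_mem _ | exact subset_span (by simp)

variable (K) in
noncomputable def monomialBasis : Basis (Fin 4) K (Aq K) :=
  .mk linearIndependent_monomials <| span_monomials_eq_top.ge.trans <| span_mono <| by
    simp [Set.insert_subset_iff]

@[simp] theorem monomialBasis_apply (k : Fin 4) :
    monomialBasis K k = ![1, ξ K, η K, ξ K * η K] k := by
  simp [monomialBasis]

def deg : Fin 4 → ℤ := ![0, -1, 1, 0]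

theorem grading_eq_span_image_deg (i : ℤ) :
    grading K i = span K (monomialBasis K '' (deg ⁻¹' {i})) := by
  unfold grading
  split_ifs <;> subst_vars <;>
    first
      | (rw [eq_comm, span_eq_bot]; simp [deg, Fin.forall_fin_succ, eq_comm, *])
      | (congr 1; ext a; simp [deg, Fin.exists_fin_succ, eq_comm])

theorem monomialBasis_mem_grading_deg (k : Fin 4) : monomialBasis K k ∈ grading K (deg k) :=
  grading_eq_span_image_deg (K := K) (deg k) ▸ subset_span ⟨k, rfl, rfl⟩

theorem one_mem_grading_zero : (1 : Aq K) ∈ grading K 0 := by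
  simpa [deg] using monomialBasis_mem_grading_deg (K := K) 0

theorem ξ_mem_grading : ξ K ∈ grading K (-1) := by
  simpa [deg] using monomialBasis_mem_grading_deg (K := K) 1

theorem η_mem_grading : η K ∈ grading K 1 := by
  simpa [deg] using monomialBasis_mem_grading_deg (K := K) 2

theorem ξ_mul_η_mem_grading : ξ K * η K ∈ grading K 0 := by
  simpa [deg] using monomialBasis_mem_grading_deg (K := K) 3

theorem isInternal_grading : DirectSum.IsInternal (grading K) := by
  rw [show grading K = _ from funext grading_eq_span_image_deg]
  exact (monomialBasis K).isInternal_span_image_fiber deg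

theorem mul_mem_grading {i j : ℤ} {a b : Aq K} (ha : a ∈ grading K i) (hb : b ∈ grading K j) :
    a * b ∈ grading K (i + j) := by
  refine mul_mem_of_eq_span grading_eq_span_image_deg ?_ ha hb
  rintro _ _ _ ⟨k, rfl, rfl⟩ _ ⟨l, rfl, rfl⟩
  fin_cases k <;> fin_cases l <;>
    simp [deg, mul_assoc, one_mem_grading_zero, ξ_mem_grading, η_mem_grading, ξ_mul_η_mem_grading]

theorem ξ_mem_Am : ξ K ∈ Am K := Algebra.self_mem_adjoin_singleton K _

theorem η_mem_Ap : η K ∈ Ap K := Algebra.self_mem_adjoin_singleton K _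

theorem toSubmodule_Am : (Am K).toSubmodule = span K {1, ξ K} :=
  Algebra.toSubmodule_adjoin_singleton_of_mul_self_eq_zero ξ_mul_ξ

theorem toSubmodule_Ap : (Ap K).toSubmodule = span K {1, η K} :=
  Algebra.toSubmodule_adjoin_singleton_of_mul_self_eq_zero η_mul_η

theorem span_one_monomialBasis_inf_grading_zero (k : Fin 4) (hk : deg k ≠ 0) :
    span K {1, monomialBasis K k} ⊓ grading K 0 = span K {1} := by
  have h1 : {1, monomialBasis K k} = monomialBasis K '' {0, k} := by simp [Set.image_insert_eq]
  have h0 : {0, k} ∩ deg ⁻¹' {0} = {0} := by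
    rw [Set.insert_inter_of_mem (show (0 : Fin 4) ∈ deg ⁻¹' {0} from rfl),
      Set.singleton_inter_eq_empty.2 (show k ∉ deg ⁻¹' {0} from hk), insert_empty_eq]
  rw [h1, grading_eq_span_image_deg, Basis.span_image_inf_span_image, h0]
  simp

theorem span_one_monomialBasis_eq_iSup_inf_grading (k : Fin 4) :
    span K {1, monomialBasis K k} = ⨆ i, span K {1, monomialBasis K k} ⊓ grading K i := by
  refine span_eq_iSup_inf_of_forall_exists_mem _ ?_
  rintro _ (rfl | rfl)
  exacts [⟨0, one_mem_grading_zero⟩, ⟨deg k, monomialBasis_mem_grading_deg k⟩]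

theorem ξ_ne_zero : ξ K ≠ 0 := (linearIndependent_monomials (K := K)).ne_zero 1

theorem η_ne_zero : η K ≠ 0 := (linearIndependent_monomials (K := K)).ne_zero 2

instance : Nontrivial (Aq K) := nontrivial_of_ne _ _ ξ_ne_zero

instance : FiniteDimensional K (Aq K) := .of_basis (monomialBasis K)

theorem triMulMap_bijective : Function.Bijective (TriangularPaper.triMulMap K (Aq K)
    (Am K).toSubmodule (⊥ : Subalgebra K (Aq K)).toSubmodule (Ap K).toSubmodule) := by
  refine TriangularPaper.triMulMap_bijective_of_surjective ?_ ?_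
  · have hmem {a b : Aq K} (ha : a ∈ Am K) (hb : b ∈ Ap K) :
        a * b ∈ LinearMap.range (TriangularPaper.triMulMap K (Aq K) (Am K).toSubmodule
          (⊥ : Subalgebra K (Aq K)).toSubmodule (Ap K).toSubmodule) := by
      simpa using TriangularPaper.mul_mul_mem_range_triMulMap (M₁ := (Am K).toSubmodule)
        (M₂ := (⊥ : Subalgebra K (Aq K)).toSubmodule) (M₃ := (Ap K).toSubmodule) ha
        (Subalgebra.one_mem _) hb
    rw [← LinearMap.range_eq_top, eq_top_iff, ← span_monomials_eq_top, span_le]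
    simp only [Set.insert_subset_iff, Set.singleton_subset_iff, SetLike.mem_coe]
    exact ⟨by simpa using hmem (one_mem _) (one_mem _), by simpa using hmem ξ_mem_Am (one_mem _),
      by simpa using hmem (one_mem _) η_mem_Ap, hmem ξ_mem_Am η_mem_Ap⟩
  · rw [toSubmodule_Am, toSubmodule_Ap, Subalgebra.finrank_toSubmodule, Subalgebra.finrank_bot,
      finrank_eq_card_basis (monomialBasis K)]
    simpa using Nat.mul_le_mul (finrank_span_pair_le 1 (ξ K)) (finrank_span_pair_le 1 (η K))

theorem triangularDecomposition :
    TriangularPaper.TriangularDecomposition K (Aq K) (grading K) (Am K) ⊥ (Ap K) where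
  internal := isInternal_grading
  one_mem := one_mem_grading_zero
  mul_mem _ _ _ _ := mul_mem_grading
  mul_bij := triMulMap_bijective
  T_deg0 := by
    rw [Algebra.toSubmodule_bot]
    exact one_le.2 one_mem_grading_zero
  neg_supp := by
    rw [toSubmodule_Am, span_le, Set.insert_subset_iff, Set.singleton_subset_iff]
    exact ⟨mem_iSup_of_mem 0 (by simpa using one_mem_grading_zero),
      mem_iSup_of_mem 1 (by simpa using ξ_mem_grading)⟩
  pos_supp := by
    rw [toSubmodule_Ap, span_le, Set.insert_subset_iff, Set.singleton_subset_iff]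
    exact ⟨mem_iSup_of_mem 0 (by simpa using one_mem_grading_zero),
      mem_iSup_of_mem 1 (by simpa using η_mem_grading)⟩
  neg_graded := by
    simpa [toSubmodule_Am] using span_one_monomialBasis_eq_iSup_inf_grading (K := K) 1
  pos_graded := by
    simpa [toSubmodule_Ap] using span_one_monomialBasis_eq_iSup_inf_grading (K := K) 2
  neg_deg0 := by
    simpa [toSubmodule_Am] using span_one_monomialBasis_inf_grading_zero (K := K) 1 (by decide)
  pos_deg0 := by
    simpa [toSubmodule_Ap] using span_one_monomialBasis_inf_grading_zero (K := K) 2 (by decide)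
  comm_pos := by rw [Algebra.toSubmodule_bot, mul_one, one_mul]
  comm_neg := by rw [Algebra.toSubmodule_bot, mul_one, one_mul]
  T_split _ _ _ _ f :=
    IsSimpleModule.exists_eq_algebraMap_smul (S := (⊥ : Subalgebra K (Aq K)))
      Algebra.surjective_algebraMap_bot f

end QuotientAlgebra

/-- `(K[x]/(x²), K, K[y]/(y²))` is a triangular decomposition of
`A = K⟨x,y⟩/⟨x², yx, y²⟩` (with `deg x = -1`, `deg y = 1`), but the opposite-order
multiplication map `K[y]/(y²) ⊗ K ⊗ K[x]/(x²) → A` is not injective, since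
`y ⊗ 1 ⊗ x` maps to `yx = 0`. -/
theorem triangular_not_ambidextrous :
    TriangularPaper.TriangularDecomposition K (Aq K) (grading K) (Am K) ⊥ (Ap K) ∧
    ξ K ∈ grading K (-1) ∧ η K ∈ grading K 1 ∧
    TriangularPaper.triMulMap K (Aq K) (Ap K).toSubmodule
        (⊥ : Subalgebra K (Aq K)).toSubmodule (Am K).toSubmodule
      (((⟨η K, Algebra.subset_adjoin (Set.mem_singleton _)⟩ : ↥(Ap K).toSubmodule) ⊗ₜ[K]
          (⟨1, Subalgebra.one_mem _⟩ : ↥(⊥ : Subalgebra K (Aq K)).toSubmodule)) ⊗ₜ[K]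
        (⟨ξ K, Algebra.subset_adjoin (Set.mem_singleton _)⟩ : ↥(Am K).toSubmodule)) = 0 ∧
    ¬ Function.Injective (TriangularPaper.triMulMap K (Aq K) (Ap K).toSubmodule
        (⊥ : Subalgebra K (Aq K)).toSubmodule (Am K).toSubmodule) := by
  refine ⟨triangularDecomposition, ξ_mem_grading, η_mem_grading, ?_, ?_⟩
  · exact (TriangularPaper.triMulMap_tmul _ _ _).trans (by simp)
  · exact TriangularPaper.not_injective_triMulMap_of_mul_mul_eq_zero
      (p := ⟨η K, η_mem_Ap⟩) (q := ⟨1, Subalgebra.one_mem _⟩) (r := ⟨ξ K, ξ_mem_Am⟩)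
      (Subtype.coe_ne_coe.1 η_ne_zero) (Subtype.coe_ne_coe.1 one_ne_zero)
      (Subtype.coe_ne_coe.1 ξ_ne_zero) (by simp)

end Stmt16
end
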